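/- arXiv:2405.10184 — 6 statements merged into one kernel-verified Lean document; each statement's English description precedes it below -/
import Mathlib

section
/- Let Q = (Q_{x,y})_{x,y∈𝒳} be a real matrix on a finite set 𝒳 with Q·𝟙 ≤ 0, Q_{x,x} ≤ 0 for all x, and Q_{x,y} ≥ 0 for all x ≠ y. Suppose for each x ∈ 𝒳 there are distinct states z₁,…,z_m, y (all different from x) with Q_{x,z₁} Q_{z₁,z₂} ⋯ Q_{z_m,y} > 0 and Σ_{z∈𝒳} Q_{y,z} < 0. Then every eigenvalue of Q has strictly negative real part; in particular Q is invertible. -/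
/-!
Let `Q v = μ v` with `v ≠ 0` and `0 ≤ re μ`, and let `z` maximise `‖v z‖ = M`. Pairing row `z`
of the eigen-equation with `conj (v z)` gives
`0 ≤ re μ · M² = ∑ w, Q z w · re (conj (v z) · v w) ≤ M ∑ w, Q z w ‖v w‖ ≤ M² ∑ w, Q z w ≤ 0`,
the middle inequalities by the sign pattern of `Q`. Hence equality holds throughout: the row sum
at `z` vanishes and `‖v w‖ = M` whenever `Q z w > 0`. The maximal modulus therefore propagates
along positive entries to a state whose row sum is negative, a contradiction. Invertibility
follows since `0` is not an eigenvalue.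
-/

open Matrix Finset Relation

section

variable {V : Type*} [Fintype V] {Q : Matrix V V ℝ} {μ : ℂ} {v : V → ℂ}

theorem rowSum_eq_zero_and_norm_eq_of_forall_norm_le {z : V}
    (hrow : ∑ w, Q z w ≤ 0) (hoff : ∀ w, w ≠ z → 0 ≤ Q z w) (hμ : 0 ≤ μ.re)
    (hv : ∑ w, (Q z w : ℂ) * v w = μ * v z) (hz : v z ≠ 0) (hmax : ∀ w, ‖v w‖ ≤ ‖v z‖) :
    ∑ w, Q z w = 0 ∧ ∀ w, 0 < Q z w → ‖v w‖ = ‖v z‖ := by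
  have hre : ∀ w, Q z w * (starRingEnd ℂ (v z) * v w).re ≤ Q z w * (‖v z‖ * ‖v w‖) := fun w => by
    rcases eq_or_ne w z with rfl | hw
    · rw [Complex.conj_mul', ← sq, ← Complex.ofReal_pow, Complex.ofReal_re]
    · refine mul_le_mul_of_nonneg_left ?_ (hoff w hw)
      simpa using Complex.re_le_norm (starRingEnd ℂ (v z) * v w)
  have hgap : ∀ w, 0 ≤ Q z w * (‖v z‖ - ‖v w‖) := fun w => by
    rcases eq_or_ne w z with rfl | hw
    · simp
    · exact mul_nonneg (hoff w hw) (sub_nonneg.2 (hmax w))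
  have hsum : ∑ w, Q z w * (starRingEnd ℂ (v z) * v w).re = μ.re * ‖v z‖ ^ 2 := by
    have := congrArg (fun s => (starRingEnd ℂ (v z) * s).re) hv
    simp only [mul_sum, Complex.re_sum, mul_left_comm _ (Q z _ : ℂ), Complex.re_ofReal_mul,
      mul_left_comm _ μ, Complex.conj_mul'] at this
    rw [this, ← Complex.ofReal_pow, Complex.re_mul_ofReal]
  have hM : 0 < ‖v z‖ := norm_pos_iff.2 hz
  have hsplit : ∑ w, Q z w * (‖v z‖ * ‖v w‖) =
      ‖v z‖ * (‖v z‖ * ∑ w, Q z w - ∑ w, Q z w * (‖v z‖ - ‖v w‖)) := by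
    simp only [mul_sum, ← sum_sub_distrib]
    exact sum_congr rfl fun w _ => by ring
  have hlow : 0 ≤ ‖v z‖ * ∑ w, Q z w - ∑ w, Q z w * (‖v z‖ - ‖v w‖) := by
    refine nonneg_of_mul_nonneg_right ?_ hM
    calc 0 ≤ μ.re * ‖v z‖ ^ 2 := by positivity
      _ = _ := hsum.symm
      _ ≤ _ := sum_le_sum fun w _ => hre w
      _ = _ := hsplit
  have hgap0 : ∑ w, Q z w * (‖v z‖ - ‖v w‖) = 0 :=
    le_antisymm (by linarith [mul_nonpos_of_nonneg_of_nonpos hM.le hrow])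
      (sum_nonneg fun w _ => hgap w)
  refine ⟨le_antisymm hrow (nonneg_of_mul_nonneg_right (by linarith) hM), fun w hw => ?_⟩
  have := (sum_eq_zero_iff_of_nonneg fun w _ => hgap w).1 hgap0 w (mem_univ w)
  rcases mul_eq_zero.1 this with h | h
  · exact absurd h hw.ne'
  · linarith

theorem norm_eq_and_rowSum_eq_zero_of_reflTransGen {x y : V}
    (hrow : ∀ x, ∑ y, Q x y ≤ 0) (hoff : ∀ x y, x ≠ y → 0 ≤ Q x y) (hμ : 0 ≤ μ.re)
    (hv : Q.map Complex.ofReal *ᵥ v = μ • v) (hx : v x ≠ 0) (hmax : ∀ w, ‖v w‖ ≤ ‖v x‖)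
    (hxy : ReflTransGen (fun a b => 0 < Q a b) x y) :
    ‖v y‖ = ‖v x‖ ∧ ∑ w, Q y w = 0 := by
  have step : ∀ z, ‖v z‖ = ‖v x‖ → ∑ w, Q z w = 0 ∧ ∀ w, 0 < Q z w → ‖v w‖ = ‖v z‖ := by
    intro z hz
    refine rowSum_eq_zero_and_norm_eq_of_forall_norm_le (hrow z) (fun w hw => hoff z w hw.symm) hμ
      (by simpa [mulVec, dotProduct] using congrFun hv z) ?_ (hz ▸ hmax)
    exact norm_ne_zero_iff.1 (hz ▸ norm_ne_zero_iff.2 hx)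
  have hnorm : ‖v y‖ = ‖v x‖ := by
    induction hxy with
    | refl => rfl
    | tail _ hbc ih => exact ((step _ ih).2 _ hbc).trans ih
  exact ⟨hnorm, (step y hnorm).1⟩

theorem re_lt_zero_of_mulVec_eq_smul
    (hrow : ∀ x, ∑ y, Q x y ≤ 0) (hoff : ∀ x y, x ≠ y → 0 ≤ Q x y)
    (hreach : ∀ x, ∃ y, ReflTransGen (fun a b => 0 < Q a b) x y ∧ ∑ w, Q y w < 0)
    (hv : Q.map Complex.ofReal *ᵥ v = μ • v) (hv0 : v ≠ 0) : μ.re < 0 := by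
  by_contra! hμ
  obtain ⟨w, hw⟩ := Function.ne_iff.1 hv0
  have : Nonempty V := ⟨w⟩
  obtain ⟨x, hmax⟩ := Finite.exists_max (‖v ·‖)
  have hx : v x ≠ 0 := norm_pos_iff.1 ((norm_pos_iff.2 hw).trans_le (hmax w))
  obtain ⟨y, hxy, hy⟩ := hreach x
  exact hy.ne (norm_eq_and_rowSum_eq_zero_of_reflTransGen hrow hoff hμ hv hx hmax hxy).2

end

theorem stmt5_general {V : Type*} [Fintype V] [DecidableEq V]
    (Q : Matrix V V ℝ)
    (hrow : ∀ x, ∑ y, Q x y ≤ 0)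
    (hoff : ∀ x y, x ≠ y → 0 ≤ Q x y)
    (hpath : ∀ x : V, ∃ (l : List V) (y : V),
      (x :: (l ++ [y])).Nodup ∧
      List.Chain (fun a b => 0 < Q a b) x (l ++ [y]) ∧
      ∑ z, Q y z < 0) :
    (∀ μ : ℂ, μ ∈ spectrum ℂ (Q.map Complex.ofReal) → μ.re < 0) ∧ IsUnit Q := by
  have hreach : ∀ x, ∃ y, ReflTransGen (fun a b => 0 < Q a b) x y ∧ ∑ w, Q y w < 0 := fun x =>
    let ⟨l, y, _, hchain, hy⟩ := hpath x
    ⟨y, List.relationReflTransGen_of_exists_isChain_cons _ hchain (by simp), hy⟩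
  have hspec : ∀ μ ∈ spectrum ℂ (Q.map Complex.ofReal), μ.re < 0 := fun μ hμ => by
    rw [← Matrix.spectrum_toLin', ← Module.End.hasEigenvalue_iff_mem_spectrum] at hμ
    obtain ⟨v, hv⟩ := hμ.exists_hasEigenvector
    exact re_lt_zero_of_mulVec_eq_smul hrow hoff hreach (by simpa using hv.apply_eq_smul) hv.2
  have hunit : IsUnit (Q.map Complex.ofReal) := by
    by_contra h
    simpa using hspec 0 ((spectrum.zero_mem_iff ℂ).2 h)
  refine ⟨hspec, ?_⟩
  rw [isUnit_iff_isUnit_det, isUnit_iff_ne_zero] at hunit ⊢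
  have hdet : (Q.map Complex.ofReal).det = Q.det := (Complex.ofRealHom.map_det Q).symm
  exact_mod_cast hdet ▸ hunit

/-- Let `Q` be a real matrix on a finite set with nonpositive row sums, nonpositive diagonal
and nonnegative off-diagonal entries. If from each state `x` there is a chain of distinct
states (all different from `x`) with positive entries leading to a state `y` whose row sum is
strictly negative, then every complex eigenvalue of `Q` has strictly negative real part; in
particular `Q` is invertible. -/
theorem stmt5 {V : Type*} [Fintype V] [DecidableEq V] [Nonempty V]
    (Q : Matrix V V ℝ)
    (hrow : ∀ x, ∑ y, Q x y ≤ 0)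
    (hdiag : ∀ x, Q x x ≤ 0)
    (hoff : ∀ x y, x ≠ y → 0 ≤ Q x y)
    (hpath : ∀ x : V, ∃ (l : List V) (y : V),
      (x :: (l ++ [y])).Nodup ∧
      List.Chain (fun a b => 0 < Q a b) x (l ++ [y]) ∧
      ∑ z, Q y z < 0) :
    (∀ μ : ℂ, μ ∈ spectrum ℂ (Q.map Complex.ofReal) → μ.re < 0) ∧ IsUnit Q :=
  stmt5_general Q hrow hoff hpath
end

section
/- Consider a family of generators Q(ε) = Σ_{k≥0} ε^k Q^(k) on a finite state space 𝒳 = 𝒜 ∪ 𝒯 such that Q(ε) is an irreducible Q-matrix for 0 < ε < ε₀, and for ε = 0 every state of 𝒜 is absorbing and every state of 𝒯 is transient (so Q^(0) has block form with zero blocks on the 𝒜-rows, and blocks R₀, T₀ on the 𝒯-rows with T₀ invertible). Write Q^(1) in blocks A₁ (𝒜×𝒜), S₁ (𝒜×𝒯), R₁, T₁. Then the matrix Q_𝒜 := A₁ + S₁ (−T₀)⁻¹ R₀ is a Q-matrix on 𝒜: its off-diagonal entries are nonnegative and its row sums are zero. -/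
/-!
Because the 𝒜-rows of `Q(0)` vanish, `Q(ε)_{a,y} = ε Q⁽¹⁾_{a,y} + O(ε²)`, so the 𝒜-rows of `Q⁽¹⁾`
inherit nonnegative off-diagonal entries and zero row sums from the Q-matrices `Q(ε)`.

The absorption matrix `(−T₀)⁻¹ R₀` is stochastic. Its row sums are one because zero row sums of
`Q(0)` give `(−T₀) 𝟙 = R₀ 𝟙`. It is nonnegative by the minimum principle: if `(−T₀) x ≥ 0`, extend
`x` by `0` on 𝒜; a negative minimum would be attained in 𝒯, the set of minimizers is closed under
positive transitions of `Q(0)`, and every transient state reaches 𝒜, where the value is `0`.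
Then `A₁ + S₁ (−T₀)⁻¹ R₀` has nonnegative off-diagonal entries and row sums `∑ A₁ + ∑ S₁ = 0`.
-/

open Matrix

/-- The matrix `Q_𝒜 = A₁ + S₁ (−T₀)⁻¹ R₀`, built from the blocks of `Q⁽¹⁾` and `Q⁽⁰⁾`
in the decomposition of the state space as 𝒜 ⊕ 𝒯. -/
noncomputable def QAmat {A T : Type*} [Fintype T] [DecidableEq T]
    (Q0 Q1 : Matrix (A ⊕ T) (A ⊕ T) ℝ) : Matrix A A ℝ :=
  Q1.toBlocks₁₁ + Q1.toBlocks₁₂ * (-Q0.toBlocks₂₂)⁻¹ * Q0.toBlocks₂₁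

open Filter Topology

lemma tendsto_sub_div_of_hasSum_pow_mul {c : ℕ → ℝ} {f : ℝ → ℝ} {ε₀ : ℝ} (hε₀ : 0 < ε₀)
    (hs : ∀ ε, 0 ≤ ε → ε < ε₀ → HasSum (fun k => ε ^ k * c k) (f ε)) :
    Tendsto (fun ε => (f ε - c 0) / ε) (𝓝[>] 0) (𝓝 (c 1)) := by
  obtain ⟨r, hr, hrε₀⟩ := exists_between hε₀
  -- the series converges absolutely at `r`, which dominates the shifted series on `[0, r]`
  have hdom : Summable fun k => r ^ k * |c (k + 1)| := by
    have h := ((hs r hr.le hrε₀).summable.abs.comp_injective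
      (add_left_injective 1)).mul_left r⁻¹
    refine h.congr fun k => ?_
    simp only [Function.comp_apply, abs_mul, abs_pow, abs_of_pos hr, pow_succ]
    field_simp
  set g := fun ε => ∑' k, ε ^ k * c (k + 1)
  have hg : ContinuousOn g (Set.Icc 0 r) := by
    refine continuousOn_tsum (fun k => by fun_prop) hdom fun k ε hε => ?_
    rw [norm_mul, norm_pow, Real.norm_eq_abs, Real.norm_eq_abs, abs_of_nonneg hε.1]
    gcongr
    · exact hε.1
    · exact hε.2
  have hg0 : g 0 = c 1 := by
    simp only [g]
    rw [tsum_eq_single 0 (fun k hk => by simp [hk])]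
    simp
  have heq : ∀ ε ∈ Set.Ioo 0 r, g ε = (f ε - c 0) / ε := by
    intro ε hε
    have hshift := (hasSum_nat_add_iff' 1).mpr (hs ε hε.1.le (hε.2.trans hrε₀))
    simp only [Finset.range_one, Finset.sum_singleton, pow_zero, one_mul, pow_succ,
      mul_comm _ ε, mul_assoc] at hshift
    rw [eq_div_iff hε.1.ne', mul_comm, ← tsum_mul_left, hshift.tsum_eq]
  rw [← hg0, ← nhdsWithin_Ioo_eq_nhdsGT hr]
  refine Tendsto.congr' ?_ ((hg 0 ⟨le_rfl, hr.le⟩).mono Set.Ioo_subset_Icc_self)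
  filter_upwards [self_mem_nhdsWithin] with ε hε using heq ε hε

lemma coeff_one_row_of_hasSum {ι : Type*} [Fintype ι] {ε₀ : ℝ} (hε₀ : 0 < ε₀)
    {q : ℝ → ι → ℝ} {c : ℕ → ι → ℝ} {i : ι}
    (hs : ∀ ε, 0 ≤ ε → ε < ε₀ → ∀ j, HasSum (fun k => ε ^ k * c k j) (q ε j))
    (hc0 : c 0 = 0)
    (hq : ∀ ε, 0 < ε → ε < ε₀ → (∀ j, i ≠ j → 0 ≤ q ε j) ∧ ∑ j, q ε j = 0) :
    (∀ j, i ≠ j → 0 ≤ c 1 j) ∧ ∑ j, c 1 j = 0 := by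
  have hlim : ∀ j, Tendsto (fun ε => q ε j / ε) (𝓝[>] 0) (𝓝 (c 1 j)) := fun j => by
    simpa [hc0] using tendsto_sub_div_of_hasSum_pow_mul hε₀ (fun ε h0 h1 => hs ε h0 h1 j)
  refine ⟨fun j hij => ge_of_tendsto (hlim j) ?_, ?_⟩
  · filter_upwards [Ioo_mem_nhdsGT hε₀] with ε hε
    exact div_nonneg ((hq ε hε.1 hε.2).1 j hij) hε.1.le
  · refine tendsto_nhds_unique (tendsto_finsetSum _ fun j _ => hlim j)
      (tendsto_const_nhds.congr' ?_)
    filter_upwards [Ioo_mem_nhdsGT hε₀] with ε hε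
    rw [← Finset.sum_div, (hq ε hε.1 hε.2).2, zero_div]

def IsQMatrix {ι : Type*} [Fintype ι] (Q : Matrix ι ι ℝ) : Prop :=
  (∀ i j, i ≠ j → 0 ≤ Q i j) ∧ ∀ i, ∑ j, Q i j = 0

namespace IsQMatrix

variable {ι : Type*} [Fintype ι] {Q : Matrix ι ι ℝ}

lemma eq_of_pos_of_isMin (hQ : IsQMatrix Q) {v : ι → ℝ} {i j : ι} (hmin : ∀ k, v i ≤ v k)
    (hv : (Q *ᵥ v) i ≤ 0) (hij : 0 < Q i j) : v j = v i := by
  have hterm : ∀ k, 0 ≤ Q i k * (v k - v i) := fun k => by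
    rcases eq_or_ne i k with rfl | hik
    · simp
    · exact mul_nonneg (hQ.1 i k hik) (sub_nonneg.2 (hmin k))
  have hsum : ∑ k, Q i k * (v k - v i) = (Q *ᵥ v) i := by
    simp only [mul_sub, Finset.sum_sub_distrib, ← Finset.sum_mul, hQ.2 i, zero_mul, sub_zero]
    rfl
  have hzero := (Finset.sum_eq_zero_iff_of_nonneg fun k _ => hterm k).1
    (le_antisymm (hsum ▸ hv) (Finset.sum_nonneg fun k _ => hterm k)) j (Finset.mem_univ j)
  exact sub_eq_zero.1 ((mul_eq_zero.1 hzero).resolve_left hij.ne')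

lemma eq_of_reflTransGen_of_isMin (hQ : IsQMatrix Q) {v : ι → ℝ} {i j : ι}
    (hmin : ∀ k, v i ≤ v k) (hv : ∀ k, v k = v i → (Q *ᵥ v) k ≤ 0)
    (hij : Relation.ReflTransGen (fun k l => 0 < Q k l) i j) : v j = v i := by
  induction hij with
  | refl => rfl
  | tail _ hkl ih =>
    exact (hQ.eq_of_pos_of_isMin (fun l => ih.le.trans (hmin l)) (hv _ ih) hkl).trans ih

end IsQMatrix

section Absorption

variable {A T : Type*} [Fintype A] [Fintype T] {Q : Matrix (A ⊕ T) (A ⊕ T) ℝ}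

lemma IsQMatrix.nonneg_of_neg_toBlocks₂₂_mulVec_nonneg (hQ : IsQMatrix Q)
    (htrans : ∀ t, ∃ a, Relation.ReflTransGen (fun u v => 0 < Q u v) (Sum.inr t) (Sum.inl a))
    {x : T → ℝ} (hx : ∀ t, 0 ≤ (-Q.toBlocks₂₂ *ᵥ x) t) (t : T) : 0 ≤ x t := by
  set v : A ⊕ T → ℝ := Sum.elim 0 x
  obtain ⟨i, -, hmin⟩ := Finset.univ.exists_min_image v ⟨Sum.inr t, Finset.mem_univ _⟩
  by_contra hneg
  have hi : v i < 0 := (hmin (Sum.inr t) (Finset.mem_univ _)).trans_lt (not_le.1 hneg)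
  have hv : ∀ k, v k = v i → (Q *ᵥ v) k ≤ 0 := by
    rintro (a | u) hk
    · simp only [v, Sum.elim_inl, Pi.zero_apply] at hk
      linarith
    · simpa [mulVec, dotProduct, Fintype.sum_sum_type, v, toBlocks₂₂] using hx u
  obtain a | s := i
  · simp [v] at hi
  obtain ⟨a, ha⟩ := htrans s
  have := hQ.eq_of_reflTransGen_of_isMin (fun k => hmin k (Finset.mem_univ _)) hv ha
  simp only [v, Sum.elim_inl, Pi.zero_apply] at this
  linarith

variable [DecidableEq T]

noncomputable def absorptionMatrix (Q : Matrix (A ⊕ T) (A ⊕ T) ℝ) : Matrix T A ℝ :=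
  (-Q.toBlocks₂₂)⁻¹ * Q.toBlocks₂₁

lemma absorptionMatrix_nonneg (hQ : IsQMatrix Q)
    (htrans : ∀ t, ∃ a, Relation.ReflTransGen (fun u v => 0 < Q u v) (Sum.inr t) (Sum.inl a))
    (hT : IsUnit Q.toBlocks₂₂) (t : T) (a : A) : 0 ≤ absorptionMatrix Q t a := by
  refine hQ.nonneg_of_neg_toBlocks₂₂_mulVec_nonneg htrans (x := fun u => absorptionMatrix Q u a)
    (fun u => ?_) t
  have hR : -Q.toBlocks₂₂ * absorptionMatrix Q = Q.toBlocks₂₁ :=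
    mul_nonsing_inv_cancel_left _ _ ((isUnit_iff_isUnit_det _).1 hT.neg)
  change 0 ≤ (-Q.toBlocks₂₂ * absorptionMatrix Q) u a
  rw [hR]
  exact hQ.1 _ _ Sum.inr_ne_inl

lemma absorptionMatrix_mulVec_one (hQ : IsQMatrix Q) (hT : IsUnit Q.toBlocks₂₂) :
    absorptionMatrix Q *ᵥ 1 = 1 := by
  have hrow : Q.toBlocks₂₁ *ᵥ 1 = -Q.toBlocks₂₂ *ᵥ 1 := by
    funext t
    have hsum := hQ.2 (Sum.inr t)
    rw [Fintype.sum_sum_type] at hsum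
    simpa [mulVec, dotProduct, toBlocks₂₁, toBlocks₂₂] using eq_neg_of_add_eq_zero_left hsum
  rw [absorptionMatrix, ← mulVec_mulVec, hrow, mulVec_mulVec,
    nonsing_inv_mul _ ((isUnit_iff_isUnit_det _).1 hT.neg), one_mulVec]

end Absorption

lemma isQMatrix_toBlocks₁₁_add_toBlocks₁₂_mul {A T : Type*} [Fintype A] [Fintype T]
    {Q : Matrix (A ⊕ T) (A ⊕ T) ℝ} {P : Matrix T A ℝ}
    (hQ : ∀ a, (∀ y, Sum.inl a ≠ y → 0 ≤ Q (Sum.inl a) y) ∧ ∑ y, Q (Sum.inl a) y = 0)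
    (hP : ∀ t b, 0 ≤ P t b) (hP1 : P *ᵥ 1 = 1) :
    IsQMatrix (Q.toBlocks₁₁ + Q.toBlocks₁₂ * P) := by
  constructor
  · intro a b hab
    simp only [Matrix.add_apply, mul_apply, toBlocks₁₁, toBlocks₁₂, of_apply]
    exact add_nonneg ((hQ a).1 _ (by simpa)) (Finset.sum_nonneg fun t _ =>
      mul_nonneg ((hQ a).1 _ Sum.inl_ne_inr) (hP t b))
  · intro a
    have h := (hQ a).2
    rw [Fintype.sum_sum_type] at h
    calc ∑ b, (Q.toBlocks₁₁ + Q.toBlocks₁₂ * P) a b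
        = ((Q.toBlocks₁₁ + Q.toBlocks₁₂ * P) *ᵥ 1) a := by simp [mulVec, dotProduct]
      _ = (Q.toBlocks₁₁ *ᵥ 1) a + (Q.toBlocks₁₂ *ᵥ 1) a := by
          rw [add_mulVec, ← mulVec_mulVec, hP1, Pi.add_apply]
      _ = 0 := by simpa [mulVec, dotProduct, toBlocks₁₁, toBlocks₁₂] using h

theorem stmt9_general {A T : Type*} [Fintype A] [Fintype T] [DecidableEq T]
    (ε₀ : ℝ) (hε₀ : 0 < ε₀)
    (Q : ℝ → Matrix (A ⊕ T) (A ⊕ T) ℝ)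
    (Qk : ℕ → Matrix (A ⊕ T) (A ⊕ T) ℝ)
    (hseries : ∀ ε : ℝ, 0 ≤ ε → ε < ε₀ → ∀ x y,
      HasSum (fun k : ℕ => ε ^ k * Qk k x y) (Q ε x y))
    (hQ0 : Qk 0 = Q 0)
    (hQmat : ∀ ε : ℝ, 0 < ε → ε < ε₀ →
      (∀ x y, x ≠ y → 0 ≤ Q ε x y) ∧ ∀ x, ∑ y, Q ε x y = 0)
    (hQ0mat : (∀ x y, x ≠ y → 0 ≤ Q 0 x y) ∧ ∀ x, ∑ y, Q 0 x y = 0)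
    (habs : ∀ a : A, ∀ y, Q 0 (Sum.inl a) y = 0)
    (htrans : ∀ t : T, ∃ a : A,
      Relation.ReflTransGen (fun u v => 0 < Q 0 u v) (Sum.inr t) (Sum.inl a))
    (hT0 : IsUnit (Q 0).toBlocks₂₂) :
    (∀ a b : A, a ≠ b → 0 ≤ QAmat (Q 0) (Qk 1) a b) ∧
    ∀ a : A, ∑ b : A, QAmat (Q 0) (Qk 1) a b = 0 := by
  have hQ1 (a : A) :
      (∀ y, Sum.inl a ≠ y → 0 ≤ Qk 1 (Sum.inl a) y) ∧ ∑ y, Qk 1 (Sum.inl a) y = 0 :=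
    coeff_one_row_of_hasSum hε₀ (c := fun k => Qk k (Sum.inl a))
      (fun ε h0 h1 => hseries ε h0 h1 _) (by rw [hQ0]; exact funext (habs a))
      (fun ε h0 h1 => ⟨(hQmat ε h0 h1).1 _, (hQmat ε h0 h1).2 _⟩)
  rw [QAmat, Matrix.mul_assoc]
  exact isQMatrix_toBlocks₁₁_add_toBlocks₁₂_mul hQ1 (absorptionMatrix_nonneg hQ0mat htrans hT0)
    (absorptionMatrix_mulVec_one hQ0mat hT0)

/-- For a family of generators `Q(ε) = Σ_k ε^k Q⁽ᵏ⁾` on `𝒜 ⊕ 𝒯`, irreducible Q-matrices for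
`0 < ε < ε₀`, such that for `ε = 0` every state of 𝒜 is absorbing and every state of 𝒯 is
transient (each leads to an absorbing state; the block `T₀` of `Q(0)` is then invertible),
the matrix `Q_𝒜 = A₁ + S₁ (−T₀)⁻¹ R₀` is a Q-matrix on 𝒜: it has nonnegative off-diagonal
entries and zero row sums. -/
theorem stmt9 {A T : Type*} [Fintype A] [Fintype T] [DecidableEq A] [DecidableEq T]
    [Nonempty A] [Nonempty T]
    (ε₀ : ℝ) (hε₀ : 0 < ε₀)
    (Q : ℝ → Matrix (A ⊕ T) (A ⊕ T) ℝ)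
    (Qk : ℕ → Matrix (A ⊕ T) (A ⊕ T) ℝ)
    (hseries : ∀ ε : ℝ, 0 ≤ ε → ε < ε₀ → ∀ x y,
      HasSum (fun k : ℕ => ε ^ k * Qk k x y) (Q ε x y))
    (hQ0 : Qk 0 = Q 0)
    (hQmat : ∀ ε : ℝ, 0 < ε → ε < ε₀ →
      (∀ x y, x ≠ y → 0 ≤ Q ε x y) ∧ ∀ x, ∑ y, Q ε x y = 0)
    (hirr : ∀ ε : ℝ, 0 < ε → ε < ε₀ →
      ∀ x y : A ⊕ T, Relation.ReflTransGen (fun a b => 0 < Q ε a b) x y)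
    (hQ0mat : (∀ x y, x ≠ y → 0 ≤ Q 0 x y) ∧ ∀ x, ∑ y, Q 0 x y = 0)
    (habs : ∀ a : A, ∀ y, Q 0 (Sum.inl a) y = 0)
    (htrans : ∀ t : T, ∃ a : A,
      Relation.ReflTransGen (fun u v => 0 < Q 0 u v) (Sum.inr t) (Sum.inl a))
    (hT0 : IsUnit (Q 0).toBlocks₂₂) :
    (∀ a b : A, a ≠ b → 0 ≤ QAmat (Q 0) (Qk 1) a b) ∧
    ∀ a : A, ∑ b : A, QAmat (Q 0) (Qk 1) a b = 0 :=
  stmt9_general ε₀ hε₀ Q Qk hseries hQ0 hQmat hQ0mat habs htrans hT0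
end

section
/- In the setting where Q(ε) is a real-analytic singular perturbation of Q(0) on 𝒳 = 𝒜 ∪ 𝒯, irreducible for ε > 0, with 𝒜 absorbing and 𝒯 transient for Q(0): the stationary distribution π(ε) of Q(ε) extends continuously to ε = 0 with π(0) = [α, 0], where α is a probability vector on 𝒜 satisfying α (A₁ + S₁ (−T₀)⁻¹ R₀) = 0; moreover, the first-order coefficient of π(ε) on the transient states satisfies β^(1) = α S₁ (−T₀)⁻¹. -/
open Matrix Filter Topology

/-!
For `ε > 0`, replacing column `x` of the irreducible generator `Q(ε)` by ones gives an invertible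
matrix whose row `x` is `π(ε)`. By Cramer's rule each `π_x(ε)` is then a ratio of functions analytic
at `0`, and being bounded by `1` it converges as `ε → 0⁺`.

Split `π(ε) Q(ε) = 0` into absorbing and transient columns. The transient part gives
`β(ε) = α(ε) S(ε) (−T(ε))⁻¹`, and `S(ε) = ε S₁ + o(ε)` because the absorbing rows of `Q(0)` vanish,
so `β(ε)/ε → α S₁ (−T₀)⁻¹`; in particular `β(ε) → 0`. Dividing the absorbing part by `ε` and
letting `ε → 0⁺` gives `α A₁ + α S₁ (−T₀)⁻¹ R₀ = 0`.
-/

section PowerSeries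

variable {a : ℕ → ℝ} {q : ℝ → ℝ} {r : ℝ}

theorem exists_analyticAt_eventuallyEq_of_hasSum (hr : 0 < r)
    (h : ∀ ε, 0 ≤ ε → ε < r → HasSum (fun k => ε ^ k * a k) (q ε)) :
    ∃ F : ℝ → ℝ, AnalyticAt ℝ F 0 ∧ HasDerivAt F (a 1) 0 ∧ q =ᶠ[𝓝[≥] 0] F := by
  set p := FormalMultilinearSeries.ofScalars ℝ a
  have hradius : ∀ s, 0 ≤ s → s < r → ENNReal.ofReal s ≤ p.radius := fun s hs₀ hs => by
    refine p.le_radius_of_tendsto (l := 0) ?_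
    simpa [p, FormalMultilinearSeries.ofScalars_norm, abs_of_nonneg hs₀, hs₀, mul_comm]
      using (h s hs₀ hs).summable.tendsto_atTop_zero.norm
  have hball : ∀ ε, 0 ≤ ε → ε < r → ε ∈ Metric.eball (0 : ℝ) p.radius := fun ε hε₀ hε => by
    rw [Metric.mem_eball, edist_zero_right, Real.enorm_eq_ofReal hε₀]
    exact (ENNReal.ofReal_lt_ofReal_iff (by linarith)).2 (by linarith : ε < (ε + r) / 2)
      |>.trans_le (hradius _ (by linarith) (by linarith))
  have hF := p.hasFPowerSeriesOnBall (by simpa using hball 0 le_rfl hr)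
  refine ⟨p.sum, hF.analyticAt, ?_, ?_⟩
  · simpa [p, FormalMultilinearSeries.ofScalars_apply_eq] using hF.hasFPowerSeriesAt.hasDerivAt
  · filter_upwards [Ico_mem_nhdsGE hr] with ε hε
    exact (h ε hε.1 hε.2).unique
      (by simpa [p, FormalMultilinearSeries.coeff_ofScalars] using hF.hasSum (hball ε hε.1 hε.2))

theorem tendsto_nhdsGT_of_hasSum (hr : 0 < r)
    (h : ∀ ε, 0 ≤ ε → ε < r → HasSum (fun k => ε ^ k * a k) (q ε)) :
    Tendsto q (𝓝[>] 0) (𝓝 (q 0)) := by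
  obtain ⟨F, hFa, -, hqF⟩ := exists_analyticAt_eventuallyEq_of_hasSum hr h
  rw [hqF.eq_of_nhdsWithin Set.self_mem_Ici]
  exact (hFa.continuousAt.tendsto.mono_left nhdsWithin_le_nhds).congr'
    (hqF.filter_mono (nhdsWithin_mono _ Set.Ioi_subset_Ici_self)).symm

theorem tendsto_inv_mul_nhdsGT_of_hasSum (hr : 0 < r)
    (h : ∀ ε, 0 ≤ ε → ε < r → HasSum (fun k => ε ^ k * a k) (q ε)) (hq₀ : q 0 = 0) :
    Tendsto (fun ε => ε⁻¹ * q ε) (𝓝[>] 0) (𝓝 (a 1)) := by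
  obtain ⟨F, -, hFd, hqF⟩ := exists_analyticAt_eventuallyEq_of_hasSum hr h
  have hF₀ : F 0 = 0 := (hqF.eq_of_nhdsWithin Set.self_mem_Ici).symm.trans hq₀
  refine ((hasDerivAt_iff_tendsto_slope.1 hFd).mono_left (nhdsGT_le_nhdsNE 0)).congr' ?_
  filter_upwards [hqF.filter_mono (nhdsWithin_mono _ Set.Ioi_subset_Ici_self)] with ε hε
  simp [slope_def_field, hF₀, hε, div_eq_inv_mul]

end PowerSeries

section Generator

variable {n : Type*} [Fintype n]

structure IsIrreducibleGenerator (M : Matrix n n ℝ) : Prop where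
  nonneg_of_ne : ∀ x y, x ≠ y → 0 ≤ M x y
  sum_row_eq_zero : ∀ x, ∑ y, M x y = 0
  reachable : ∀ x y, Relation.ReflTransGen (fun a b => 0 < M a b) x y

structure IsStationaryDistribution (M : Matrix n n ℝ) (p : n → ℝ) : Prop where
  mem_stdSimplex : p ∈ stdSimplex ℝ n
  vecMul_eq_zero : p ᵥ* M = 0

variable {M : Matrix n n ℝ} {p : n → ℝ}

/-- Maximum principle: at a maximiser `a` of `v`, `0 = (M v) a = ∑ y, M a y (v y - v a)` is a sum of
nonpositive terms, so the maximum propagates along every positive rate. -/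
theorem IsIrreducibleGenerator.eq_of_mulVec_eq_zero (hM : IsIrreducibleGenerator M) {v : n → ℝ}
    (hv : M *ᵥ v = 0) (x y : n) : v x = v y := by
  have : Nonempty n := ⟨x⟩
  obtain ⟨z, hz⟩ := Finite.exists_max v
  have hstep : ∀ a b, v a = v z → 0 < M a b → v b = v z := by
    intro a b ha hab
    have hsum : ∑ y, M a y * (v y - v a) = 0 := by
      simp only [mul_sub, Finset.sum_sub_distrib, ← Finset.sum_mul, hM.sum_row_eq_zero,
        zero_mul, sub_zero]
      exact congrFun hv a
    have hle : ∀ y ∈ Finset.univ, M a y * (v y - v a) ≤ 0 := fun y _ => by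
      rcases eq_or_ne a y with rfl | hay
      · simp
      · exact mul_nonpos_of_nonneg_of_nonpos (hM.nonneg_of_ne a y hay) (by linarith [hz y])
    rcases mul_eq_zero.1 ((Finset.sum_eq_zero_iff_of_nonpos hle).1 hsum b (Finset.mem_univ b))
      with h | h
    · exact absurd h hab.ne'
    · linarith
  have hmax : ∀ y, v y = v z := fun y => by
    induction hM.reachable z y with
    | refl => rfl
    | tail _ hab ih => exact hstep _ _ ih hab
  rw [hmax x, hmax y]

variable [DecidableEq n]

theorem vecMul_updateCol_one (hsum : ∑ x, p x = 1) (hp : p ᵥ* M = 0) (x : n) :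
    p ᵥ* M.updateCol x 1 = Pi.single x 1 := by
  rw [vecMul_updateCol, hp, dotProduct_one, hsum]
  rfl

theorem IsIrreducibleGenerator.isUnit_det_updateCol_one (hM : IsIrreducibleGenerator M)
    (hsum : ∑ x, p x = 1) (hp : p ᵥ* M = 0) (x : n) : IsUnit (M.updateCol x 1).det := by
  refine isUnit_iff_ne_zero.2 fun hdet => ?_
  obtain ⟨v, hv_ne, hv⟩ := exists_mulVec_eq_zero_iff.2 hdet
  have hvx : v x = 0 := by
    calc v x = Pi.single x 1 ⬝ᵥ v := by simp
      _ = p ⬝ᵥ (M.updateCol x 1 *ᵥ v) := by rw [dotProduct_mulVec, vecMul_updateCol_one hsum hp]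
      _ = 0 := by rw [hv, dotProduct_zero]
  have hMv : M *ᵥ v = 0 := by
    rw [← hv]
    ext r
    refine Finset.sum_congr rfl fun y _ => ?_
    rcases eq_or_ne y x with rfl | hyx
    · simp [hvx]
    · simp [hyx]
  exact hv_ne (funext fun y => (hM.eq_of_mulVec_eq_zero hMv y x).trans hvx)

theorem IsIrreducibleGenerator.apply_eq_inv_updateCol_one (hM : IsIrreducibleGenerator M)
    (hsum : ∑ x, p x = 1) (hp : p ᵥ* M = 0) (x : n) : p x = (M.updateCol x 1)⁻¹ x x := by
  have hu := hM.isUnit_det_updateCol_one hsum hp x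
  have : p = Pi.single x 1 ᵥ* (M.updateCol x 1)⁻¹ := by
    rw [← vecMul_updateCol_one hsum hp x, vecMul_vecMul, mul_nonsing_inv _ hu, vecMul_one]
  rw [this, single_vecMul]
  simp

end Generator

section Analytic

variable {𝕜 : Type*} [NontriviallyNormedField 𝕜] {n : Type*} [Fintype n] [DecidableEq n]
  {M : 𝕜 → Matrix n n 𝕜} {z : 𝕜}

theorem analyticAt_det (hM : ∀ i j, AnalyticAt 𝕜 (fun w => M w i j) z) :
    AnalyticAt 𝕜 (fun w => (M w).det) z := by
  simp only [det_apply, Units.smul_def, zsmul_eq_mul]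
  fun_prop

theorem analyticAt_adjugate_apply (hM : ∀ i j, AnalyticAt 𝕜 (fun w => M w i j) z) (i j : n) :
    AnalyticAt 𝕜 (fun w => (M w).adjugate i j) z := by
  simp only [adjugate_apply]
  refine analyticAt_det fun k l => ?_
  by_cases hk : k = j
  · simpa [hk] using analyticAt_const
  · simpa [hk] using hM k l

theorem meromorphicAt_inv_apply (hM : ∀ i j, AnalyticAt 𝕜 (fun w => M w i j) z) (i j : n) :
    MeromorphicAt (fun w => (M w)⁻¹ i j) z := by
  simp only [inv_def, Matrix.smul_apply, Ring.inverse_eq_inv', smul_eq_mul]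
  exact (analyticAt_det hM).meromorphicAt.inv.mul (analyticAt_adjugate_apply hM i j).meromorphicAt

end Analytic

/-- A function meromorphic at `x` either converges or blows up along `𝓝[≠] x`, according to the
sign of its order; boundedness on one side rules out the second case. -/
theorem MeromorphicAt.exists_tendsto_nhdsGT_of_bounded {f : ℝ → ℝ} {x C : ℝ}
    (hf : MeromorphicAt f x) (hC : ∀ᶠ y in 𝓝[>] x, |f y| ≤ C) :
    ∃ c, Tendsto f (𝓝[>] x) (𝓝 c) := by
  rcases lt_or_ge (meromorphicOrderAt f x) 0 with ho | ho
  · have hinf := (tendsto_norm_atTop_iff_cobounded.2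
      (tendsto_cobounded_of_meromorphicOrderAt_neg ho)).mono_left (nhdsGT_le_nhdsNE x)
    obtain ⟨y, hy, hyC⟩ := ((hinf.eventually_gt_atTop C).and hC).exists
    exact absurd hyC (by simpa using hy)
  · obtain ⟨c, hc⟩ := tendsto_nhds_of_meromorphicOrderAt_nonneg hf ho
    exact ⟨c, hc.mono_left (nhdsGT_le_nhdsNE x)⟩

theorem exists_tendsto_of_isStationaryDistribution {n : Type*} [Fintype n]
    {Q : ℝ → Matrix n n ℝ} {π : ℝ → n → ℝ}
    (hQ : ∀ x y, ∃ F : ℝ → ℝ, AnalyticAt ℝ F 0 ∧ (fun ε => Q ε x y) =ᶠ[𝓝[>] 0] F)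
    (hgen : ∀ᶠ ε in 𝓝[>] 0, IsIrreducibleGenerator (Q ε))
    (hπ : ∀ᶠ ε in 𝓝[>] 0, IsStationaryDistribution (Q ε) (π ε)) :
    ∃ L, Tendsto π (𝓝[>] 0) (𝓝 L) := by
  classical
  choose F hFa hQF using hQ
  have hQF' : ∀ᶠ ε in 𝓝[>] 0, Q ε = of fun x y => F x y ε := by
    filter_upwards [eventually_all.2 fun x => eventually_all.2 (hQF x)] with ε hε
    ext x y
    exact hε x y
  suffices ∀ x, ∃ c, Tendsto (fun ε => π ε x) (𝓝[>] 0) (𝓝 c) by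
    choose L hL using this
    exact ⟨L, tendsto_pi_nhds.2 hL⟩
  intro x
  set B : ℝ → Matrix n n ℝ := fun ε => (of fun x y => F x y ε).updateCol x 1
  have hBa : ∀ i j, AnalyticAt ℝ (fun ε => B ε i j) 0 := fun i j => by
    by_cases hj : j = x
    · simpa [B, hj] using analyticAt_const
    · simpa [B, hj] using hFa i j
  have hπB : ∀ᶠ ε in 𝓝[>] 0, π ε x = (B ε)⁻¹ x x := by
    filter_upwards [hQF', hgen, hπ] with ε hQε hgen hπ
    simp only [B, ← hQε]
    exact hgen.apply_eq_inv_updateCol_one hπ.mem_stdSimplex.2 hπ.vecMul_eq_zero x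
  have hbound : ∀ᶠ ε in 𝓝[>] 0, |(B ε)⁻¹ x x| ≤ 1 := by
    filter_upwards [hπB, hπ] with ε hπB hπ
    have := mem_Icc_of_mem_stdSimplex hπ.mem_stdSimplex x
    rw [← hπB, abs_of_nonneg this.1]
    exact this.2
  obtain ⟨c, hc⟩ := (meromorphicAt_inv_apply hBa x x).exists_tendsto_nhdsGT_of_bounded hbound
  exact ⟨c, hc.congr' (hπB.mono fun _ h => h.symm)⟩

section MatrixLimits

variable {X m n p q R : Type*} [TopologicalSpace R] {l : Filter X}

theorem Filter.Tendsto.matrix_vecMul [Fintype m] [NonUnitalNonAssocSemiring R] [ContinuousAdd R]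
    [ContinuousMul R] {v : X → m → R} {M : X → Matrix m n R} {v₀ : m → R} {M₀ : Matrix m n R}
    (hv : Tendsto v l (𝓝 v₀)) (hM : Tendsto M l (𝓝 M₀)) :
    Tendsto (fun x => v x ᵥ* M x) l (𝓝 (v₀ ᵥ* M₀)) :=
  ((continuous_fst.matrix_vecMul continuous_snd).tendsto (v₀, M₀)).comp (hv.prodMk_nhds hM)

theorem Filter.Tendsto.matrix_submatrix {M : X → Matrix m n R} {M₀ : Matrix m n R}
    (hM : Tendsto M l (𝓝 M₀)) (r : p → m) (c : q → n) :
    Tendsto (fun x => (M x).submatrix r c) l (𝓝 (M₀.submatrix r c)) :=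
  ((continuous_id.matrix_submatrix r c).tendsto M₀).comp hM

theorem Filter.Tendsto.matrix_inv [Fintype n] [DecidableEq n] [Field R] [IsTopologicalRing R]
    [ContinuousInv₀ R] {M : X → Matrix n n R} {M₀ : Matrix n n R} (hM : Tendsto M l (𝓝 M₀))
    (h : M₀.det ≠ 0) : Tendsto (fun x => (M x)⁻¹) l (𝓝 M₀⁻¹) := by
  have hinv : ContinuousAt Ring.inverse M₀.det := by
    rw [Ring.inverse_eq_inv']
    exact continuousAt_inv₀ h
  exact (continuousAt_matrix_inv M₀ hinv).tendsto.comp hM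

end MatrixLimits

theorem Matrix.vecMul_toBlocks_eq_zero {m o l k R : Type*} [Fintype m] [Fintype o]
    [NonUnitalNonAssocSemiring R] {M : Matrix (m ⊕ o) (l ⊕ k) R} {x : m ⊕ o → R}
    (h : x ᵥ* M = 0) :
    (x ∘ Sum.inl) ᵥ* M.toBlocks₁₁ + (x ∘ Sum.inr) ᵥ* M.toBlocks₂₁ = 0 ∧
      (x ∘ Sum.inl) ᵥ* M.toBlocks₁₂ + (x ∘ Sum.inr) ᵥ* M.toBlocks₂₂ = 0 := by
  rw [← fromBlocks_toBlocks M, vecMul_fromBlocks] at h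
  exact ⟨by simpa using congrArg (· ∘ Sum.inl) h, by simpa using congrArg (· ∘ Sum.inr) h⟩

theorem tendsto_zero_of_tendsto_inv_smul {E : Type*} [AddCommGroup E] [Module ℝ E]
    [TopologicalSpace E] [ContinuousSMul ℝ E] {f : ℝ → E} {c : E}
    (h : Tendsto (fun ε => ε⁻¹ • f ε) (𝓝[>] 0) (𝓝 c)) : Tendsto f (𝓝[>] 0) (𝓝 0) := by
  have := (tendsto_nhdsWithin_of_tendsto_nhds tendsto_id).smul h
  rw [zero_smul] at this
  refine this.congr' ?_
  filter_upwards [self_mem_nhdsWithin] with ε (hε : 0 < ε)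
  exact smul_inv_smul₀ hε.ne' _

section SingularPerturbation

variable {A T : Type*} [Fintype A] [Fintype T] [DecidableEq T]
  {Q : ℝ → Matrix (A ⊕ T) (A ⊕ T) ℝ} {Q₁ : Matrix (A ⊕ T) (A ⊕ T) ℝ} {π : ℝ → A ⊕ T → ℝ}
  {α : A → ℝ}

theorem tendsto_inv_smul_comp_inr (hQ : Tendsto Q (𝓝[>] 0) (𝓝 (Q 0)))
    (hslope : ∀ a y, Tendsto (fun ε => ε⁻¹ * Q ε (Sum.inl a) y) (𝓝[>] 0) (𝓝 (Q₁ (Sum.inl a) y)))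
    (hT₀ : IsUnit (Q 0).toBlocks₂₂) (hα : Tendsto (fun ε => π ε ∘ Sum.inl) (𝓝[>] 0) (𝓝 α))
    (hπ : ∀ᶠ ε in 𝓝[>] 0, π ε ᵥ* Q ε = 0) :
    Tendsto (fun ε => ε⁻¹ • (π ε ∘ Sum.inr)) (𝓝[>] 0)
      (𝓝 (α ᵥ* (Q₁.toBlocks₁₂ * (-(Q 0).toBlocks₂₂)⁻¹))) := by
  have hS : Tendsto (fun ε => ε⁻¹ • (Q ε).toBlocks₁₂) (𝓝[>] 0) (𝓝 Q₁.toBlocks₁₂) :=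
    tendsto_pi_nhds.2 fun a => tendsto_pi_nhds.2 fun t => hslope a (Sum.inr t)
  have hU : Tendsto (fun ε => -(Q ε).toBlocks₂₂) (𝓝[>] 0) (𝓝 (-(Q 0).toBlocks₂₂)) :=
    (hQ.matrix_submatrix Sum.inr Sum.inr).neg
  have hdet : (-(Q 0).toBlocks₂₂).det ≠ 0 :=
    ((isUnit_iff_isUnit_det _).1 hT₀.neg).ne_zero
  have hdet_ev : ∀ᶠ ε in 𝓝[>] 0, (-(Q ε).toBlocks₂₂).det ≠ 0 :=
    ((continuous_id.matrix_det.tendsto _).comp hU).eventually_ne hdet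
  rw [← vecMul_vecMul]
  refine ((hα.matrix_vecMul hS).matrix_vecMul (hU.matrix_inv hdet)).congr' ?_
  filter_upwards [hπ, hdet_ev] with ε hπ hdet
  have hβ : (π ε ∘ Sum.inr) ᵥ* -(Q ε).toBlocks₂₂ = (π ε ∘ Sum.inl) ᵥ* (Q ε).toBlocks₁₂ := by
    rw [vecMul_neg, neg_eq_iff_eq_neg, eq_neg_iff_add_eq_zero, add_comm]
    exact (vecMul_toBlocks_eq_zero hπ).2
  rw [vecMul_smul, smul_vecMul, ← hβ, vecMul_vecMul, mul_nonsing_inv _ (isUnit_iff_ne_zero.2 hdet),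
    vecMul_one]

theorem vecMul_QAmat_eq_zero (hQ : Tendsto Q (𝓝[>] 0) (𝓝 (Q 0)))
    (hslope : ∀ a y, Tendsto (fun ε => ε⁻¹ * Q ε (Sum.inl a) y) (𝓝[>] 0) (𝓝 (Q₁ (Sum.inl a) y)))
    (hT₀ : IsUnit (Q 0).toBlocks₂₂) (hα : Tendsto (fun ε => π ε ∘ Sum.inl) (𝓝[>] 0) (𝓝 α))
    (hπ : ∀ᶠ ε in 𝓝[>] 0, π ε ᵥ* Q ε = 0) :
    α ᵥ* QAmat (Q 0) Q₁ = 0 := by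
  have hA : Tendsto (fun ε => ε⁻¹ • (Q ε).toBlocks₁₁) (𝓝[>] 0) (𝓝 Q₁.toBlocks₁₁) :=
    tendsto_pi_nhds.2 fun a => tendsto_pi_nhds.2 fun a' => hslope a (Sum.inl a')
  have hR : Tendsto (fun ε => (Q ε).toBlocks₂₁) (𝓝[>] 0) (𝓝 (Q 0).toBlocks₂₁) :=
    hQ.matrix_submatrix Sum.inr Sum.inl
  have hlim := (hα.matrix_vecMul hA).add
    ((tendsto_inv_smul_comp_inr hQ hslope hT₀ hα hπ).matrix_vecMul hR)
  rw [QAmat, vecMul_add, ← vecMul_vecMul _ (_ * _)]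
  refine tendsto_nhds_unique hlim (tendsto_const_nhds.congr' ?_)
  filter_upwards [hπ] with ε hπ
  rw [vecMul_smul, smul_vecMul, ← smul_add, (vecMul_toBlocks_eq_zero hπ).1, smul_zero]

end SingularPerturbation

theorem stmt10_general {A T : Type*} [Fintype A] [Fintype T] [DecidableEq T]
    (ε₀ : ℝ) (hε₀ : 0 < ε₀)
    (Q : ℝ → Matrix (A ⊕ T) (A ⊕ T) ℝ)
    (Qk : ℕ → Matrix (A ⊕ T) (A ⊕ T) ℝ)
    (hseries : ∀ ε : ℝ, 0 ≤ ε → ε < ε₀ → ∀ x y,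
      HasSum (fun k : ℕ => ε ^ k * Qk k x y) (Q ε x y))
    (hQmat : ∀ ε : ℝ, 0 < ε → ε < ε₀ →
      (∀ x y, x ≠ y → 0 ≤ Q ε x y) ∧ ∀ x, ∑ y, Q ε x y = 0)
    (hirr : ∀ ε : ℝ, 0 < ε → ε < ε₀ →
      ∀ x y : A ⊕ T, Relation.ReflTransGen (fun a b => 0 < Q ε a b) x y)
    (habs : ∀ a : A, ∀ y, Q 0 (Sum.inl a) y = 0)
    (hT0 : IsUnit (Q 0).toBlocks₂₂)
    (π : ℝ → (A ⊕ T) → ℝ)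
    (hπ : ∀ ε : ℝ, 0 < ε → ε < ε₀ →
      (∀ x, 0 ≤ π ε x) ∧ (∑ x, π ε x = 1) ∧
      ∀ y, ∑ x, π ε x * Q ε x y = 0) :
    ∃ α : A → ℝ,
      (∀ a, 0 ≤ α a) ∧ (∑ a, α a = 1) ∧
      α ᵥ* QAmat (Q 0) (Qk 1) = 0 ∧
      (∀ a : A, Tendsto (fun ε => π ε (Sum.inl a)) (𝓝[>] (0 : ℝ)) (𝓝 (α a))) ∧
      (∀ t : T, Tendsto (fun ε => π ε (Sum.inr t)) (𝓝[>] (0 : ℝ)) (𝓝 0)) ∧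
      ∀ t : T, Tendsto (fun ε => π ε (Sum.inr t) / ε) (𝓝[>] (0 : ℝ))
        (𝓝 ((α ᵥ* ((Qk 1).toBlocks₁₂ * (-(Q 0).toBlocks₂₂)⁻¹)) t)) := by
  have hentry (x y) : ∀ ε, 0 ≤ ε → ε < ε₀ → HasSum (fun k => ε ^ k * Qk k x y) (Q ε x y) :=
    fun ε h₀ h₁ => hseries ε h₀ h₁ x y
  have hQ : Tendsto Q (𝓝[>] 0) (𝓝 (Q 0)) := tendsto_pi_nhds.2 fun x =>
    tendsto_pi_nhds.2 fun y => tendsto_nhdsGT_of_hasSum hε₀ (hentry x y)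
  have hslope (a y) : Tendsto (fun ε => ε⁻¹ * Q ε (Sum.inl a) y) (𝓝[>] 0)
      (𝓝 (Qk 1 (Sum.inl a) y)) :=
    tendsto_inv_mul_nhdsGT_of_hasSum hε₀ (hentry _ _) (habs a y)
  have hIoo : ∀ᶠ ε in 𝓝[>] (0 : ℝ), 0 < ε ∧ ε < ε₀ := Ioo_mem_nhdsGT hε₀
  have hgen : ∀ᶠ ε in 𝓝[>] 0, IsIrreducibleGenerator (Q ε) :=
    hIoo.mono fun ε ⟨h₀, h₁⟩ => ⟨(hQmat ε h₀ h₁).1, (hQmat ε h₀ h₁).2, hirr ε h₀ h₁⟩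
  have hstat : ∀ᶠ ε in 𝓝[>] 0, IsStationaryDistribution (Q ε) (π ε) :=
    hIoo.mono fun ε ⟨h₀, h₁⟩ => ⟨⟨(hπ ε h₀ h₁).1, (hπ ε h₀ h₁).2.1⟩, funext (hπ ε h₀ h₁).2.2⟩
  obtain ⟨L, hL⟩ := exists_tendsto_of_isStationaryDistribution (fun x y =>
    (exists_analyticAt_eventuallyEq_of_hasSum hε₀ (hentry x y)).imp fun _ hF =>
      ⟨hF.1, hF.2.2.filter_mono (nhdsWithin_mono _ Set.Ioi_subset_Ici_self)⟩) hgen hstat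
  have hL_mem : L ∈ stdSimplex ℝ (A ⊕ T) :=
    (isClosed_stdSimplex ℝ _).mem_of_tendsto hL (hstat.mono fun _ h => h.mem_stdSimplex)
  have hα : Tendsto (fun ε => π ε ∘ Sum.inl) (𝓝[>] 0) (𝓝 (L ∘ Sum.inl)) :=
    tendsto_pi_nhds.2 fun a => tendsto_pi_nhds.1 hL (Sum.inl a)
  have hvec := hstat.mono fun _ h => h.vecMul_eq_zero
  have hβ₁ := tendsto_inv_smul_comp_inr hQ hslope hT0 hα hvec
  have hβ₀ := tendsto_zero_of_tendsto_inv_smul hβ₁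
  have hL_inr (t) : L (Sum.inr t) = 0 :=
    tendsto_nhds_unique (tendsto_pi_nhds.1 hL (Sum.inr t)) (tendsto_pi_nhds.1 hβ₀ t)
  refine ⟨L ∘ Sum.inl, fun a => hL_mem.1 _, ?_, vecMul_QAmat_eq_zero hQ hslope hT0 hα hvec,
    fun a => tendsto_pi_nhds.1 hL _, tendsto_pi_nhds.1 hβ₀,
    fun t => (tendsto_pi_nhds.1 hβ₁ t).congr fun ε => ?_⟩
  · simpa [Fintype.sum_sum_type, hL_inr] using hL_mem.2
  · simp [div_eq_inv_mul]

/-- For a real-analytic singular perturbation `Q(ε) = Σ_k ε^k Q⁽ᵏ⁾` of generators on `𝒜 ⊕ 𝒯`,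
irreducible for `0 < ε < ε₀`, with 𝒜 absorbing and 𝒯 transient for `Q(0)`, the stationary
distribution `π(ε)` extends continuously to `ε = 0` with limit `[α, 0]`, where `α` is a
probability vector on 𝒜 satisfying `α (A₁ + S₁ (−T₀)⁻¹ R₀) = 0`; moreover, the first-order
coefficient on the transient states is `β⁽¹⁾ = α S₁ (−T₀)⁻¹`, i.e.
`π_t(ε)/ε → (α S₁ (−T₀)⁻¹)_t` as `ε → 0⁺` for each `t ∈ 𝒯`. -/
theorem stmt10 {A T : Type*} [Fintype A] [Fintype T] [DecidableEq A] [DecidableEq T]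
    [Nonempty A] [Nonempty T]
    (ε₀ : ℝ) (hε₀ : 0 < ε₀)
    (Q : ℝ → Matrix (A ⊕ T) (A ⊕ T) ℝ)
    (Qk : ℕ → Matrix (A ⊕ T) (A ⊕ T) ℝ)
    (hseries : ∀ ε : ℝ, 0 ≤ ε → ε < ε₀ → ∀ x y,
      HasSum (fun k : ℕ => ε ^ k * Qk k x y) (Q ε x y))
    (hQ0 : Qk 0 = Q 0)
    (hQmat : ∀ ε : ℝ, 0 < ε → ε < ε₀ →
      (∀ x y, x ≠ y → 0 ≤ Q ε x y) ∧ ∀ x, ∑ y, Q ε x y = 0)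
    (hirr : ∀ ε : ℝ, 0 < ε → ε < ε₀ →
      ∀ x y : A ⊕ T, Relation.ReflTransGen (fun a b => 0 < Q ε a b) x y)
    (hQ0mat : (∀ x y, x ≠ y → 0 ≤ Q 0 x y) ∧ ∀ x, ∑ y, Q 0 x y = 0)
    (habs : ∀ a : A, ∀ y, Q 0 (Sum.inl a) y = 0)
    (htrans : ∀ t : T, ∃ a : A,
      Relation.ReflTransGen (fun u v => 0 < Q 0 u v) (Sum.inr t) (Sum.inl a))
    (hT0 : IsUnit (Q 0).toBlocks₂₂)
    (π : ℝ → (A ⊕ T) → ℝ)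
    (hπ : ∀ ε : ℝ, 0 < ε → ε < ε₀ →
      (∀ x, 0 ≤ π ε x) ∧ (∑ x, π ε x = 1) ∧
      ∀ y, ∑ x, π ε x * Q ε x y = 0) :
    ∃ α : A → ℝ,
      (∀ a, 0 ≤ α a) ∧ (∑ a, α a = 1) ∧
      α ᵥ* QAmat (Q 0) (Qk 1) = 0 ∧
      (∀ a : A, Tendsto (fun ε => π ε (Sum.inl a)) (𝓝[>] (0 : ℝ)) (𝓝 (α a))) ∧
      (∀ t : T, Tendsto (fun ε => π ε (Sum.inr t)) (𝓝[>] (0 : ℝ)) (𝓝 0)) ∧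
      ∀ t : T, Tendsto (fun ε => π ε (Sum.inr t) / ε) (𝓝[>] (0 : ℝ))
        (𝓝 ((α ᵥ* ((Qk 1).toBlocks₁₂ * (-(Q 0).toBlocks₂₂)⁻¹)) t)) :=
  stmt10_general ε₀ hε₀ Q Qk hseries hQmat hirr habs hT0 π hπ
end

section
/- Suppose Assumptions hold: 𝒜 absorbing and 𝒯 transient for Q(0), the restricted chain generated by Q_𝒜 has a single recurrent class, and the perturbation is linear: Q(ε) = Q^(0) + ε Q^(1). Then for every k ≥ 1 the coefficients of the stationary distribution expansion π(ε) = Σ_k ε^k [α^(k), β^(k)] satisfy the recursion β^(k) = (α^(k−1) S₁ + β^(k−1) T₁)(−T₀)⁻¹, and α^(k) is the unique vector solving α^(k) Q_𝒜 = −β^(k)(R₁ + T₁(−T₀)⁻¹R₀) together with α^(k)·𝟙 = −β^(k)·𝟙. -/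
/-!
Substituting the expansion into `π(ε) Q(ε) = 0` and `π(ε) 𝟙 = 1` and comparing coefficients (a
power series vanishing on an interval `(0, r)` vanishes identically) gives
`π⁽ᵏ⁺¹⁾ Q⁽⁰⁾ + π⁽ᵏ⁾ Q⁽¹⁾ = 0` for all `k` and `π⁽ᵏ⁾ 𝟙 = 0` for `k ≥ 1`. The rows of `Q⁽⁰⁾` indexed
by `𝒜` vanish, so the `𝒯`-block of the first identity is the recursion for `β⁽ᵏ⁺¹⁾`, and
substituting it into the `𝒜`-block gives the equation for `α⁽ᵏ⁾`.

For uniqueness, `Q_𝒜` is a rate matrix: `(−T₀)⁻¹ ≥ 0` by the minimum principle, since every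
transient state reaches `𝒜`. For a rate matrix with a single recurrent class the maximum principle
makes every harmonic function constant, so its range is a hyperplane not containing `𝟙`. A nonzero
left null vector `w` with zero sum would force that range to be the hyperplane `w⊥ ∋ 𝟙`.
-/

open Matrix

def LeadsTo {V : Type*} (M : Matrix V V ℝ) (x y : V) : Prop :=
  Relation.ReflTransGen (fun a b => 0 < M a b) x y

/-- A recurrent class: a nonempty closed communicating class. -/
def IsRecurrentClass {V : Type*} (M : Matrix V V ℝ) (C : Set V) : Prop :=
  C.Nonempty ∧ (∀ x ∈ C, ∀ y ∈ C, LeadsTo M x y) ∧ (∀ x ∈ C, ∀ y, LeadsTo M x y → y ∈ C)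

open Filter Topology

theorem eq_zero_of_hasSum_pow_mul_eq_zero {c : ℕ → ℝ} {r : ℝ} (hr : 0 < r)
    (h : ∀ ε, 0 < ε → ε < r → HasSum (fun k => ε ^ k * c k) 0) : c = 0 := by
  set p := FormalMultilinearSeries.ofScalars ℝ c
  have hsum : ∀ ε, 0 < ε → ε < r → p.sum ε = 0 := fun ε hε hεr => by
    rw [← FormalMultilinearSeries.ofScalarsSum, FormalMultilinearSeries.ofScalars_sum_eq,
      ← (h ε hε hεr).tsum_eq]
    simp only [smul_eq_mul, mul_comm]
  obtain ⟨ρ, hρ, hρr⟩ := exists_between hr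
  lift ρ to NNReal using hρ.le
  have hρp : (ρ : ENNReal) ≤ p.radius := p.le_radius_of_tendsto (l := 0) <| by
    simpa [p, FormalMultilinearSeries.ofScalars_norm, mul_comm, abs_of_pos hρ] using
      (h ρ hρ hρr).summable.tendsto_atTop_zero.norm
  have hp := p.hasFPowerSeriesOnBall ((ENNReal.coe_pos.mpr (mod_cast hρ)).trans_le hρp)
  have hzero : ∀ᶠ z in 𝓝[>] (0 : ℝ), p.sum z = 0 := by
    filter_upwards [Ioo_mem_nhdsGT hr] with ε hε using hsum ε hε.1 hε.2
  have hfreq : ∃ᶠ z in 𝓝[≠] (0 : ℝ), p.sum z = 0 :=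
    hzero.frequently.filter_mono (nhdsGT_le_nhdsNE 0)
  exact (FormalMultilinearSeries.ofScalars_series_eq_zero ℝ).mp <|
    hp.hasFPowerSeriesAt.eq_zero_of_eventually
      (hp.analyticAt.frequently_zero_iff_eventually_zero.mp hfreq)

theorem add_eq_zero_of_hasSum_add_smul {ι : Type*} {a b : ℕ → ι → ℝ} {f g : ℝ → ι → ℝ}
    {r : ℝ} (hr : 0 < r)
    (ha : ∀ ε, 0 < ε → ε < r → HasSum (fun n => ε ^ n • a n) (f ε))
    (hb : ∀ ε, 0 < ε → ε < r → HasSum (fun n => ε ^ n • b n) (g ε))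
    (hfg : ∀ ε, 0 < ε → ε < r → f ε + ε • g ε = 0) (n : ℕ) : a (n + 1) + b n = 0 := by
  set c : ℕ → ι → ℝ := fun n => a n + if n = 0 then 0 else b (n - 1)
  have hc : ∀ ε, 0 < ε → ε < r → HasSum (fun n => ε ^ n • c n) 0 := fun ε hε hεr => by
    have hb' : HasSum (fun n => ε ^ n • if n = 0 then 0 else b (n - 1)) (ε • g ε) :=
      (hasSum_nat_add_iff' 1).mp <| by
        simpa [pow_succ', mul_smul] using (hb ε hε hεr).const_smul ε
    simpa [c, smul_add, ← hfg ε hε hεr] using (ha ε hε hεr).add hb'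
  funext i
  have := eq_zero_of_hasSum_pow_mul_eq_zero hr fun ε hε hεr =>
    Pi.hasSum.mp (hc ε hε hεr) i
  simpa [c] using congrFun this (n + 1)

theorem exists_isRecurrentClass_leadsTo {V : Type*} [Finite V] (M : Matrix V V ℝ) (x : V) :
    ∃ C, IsRecurrentClass M C ∧ ∃ y ∈ C, LeadsTo M x y := by
  obtain ⟨y, hxy, hmin⟩ := Set.exists_min_image {y | LeadsTo M x y}
    (fun y => {z | LeadsTo M y z}.ncard) (Set.toFinite _) ⟨x, .refl⟩
  have hback : ∀ z, LeadsTo M y z → LeadsTo M z y := by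
    intro z hyz
    by_contra hzy
    have hlt : {w | LeadsTo M z w} ⊂ {w | LeadsTo M y w} :=
      ⟨fun w hzw => hyz.trans hzw, fun hsub => hzy (hsub (Relation.ReflTransGen.refl (a := y)))⟩
    exact (Set.ncard_lt_ncard hlt (Set.toFinite _)).not_ge (hmin z (hxy.trans hyz))
  refine ⟨{z | LeadsTo M y z}, ⟨⟨y, .refl⟩, ?_, ?_⟩, y, .refl, hxy⟩
  · exact fun z₁ h₁ z₂ h₂ => (hback z₁ h₁).trans h₂
  · exact fun z₁ h₁ z₂ h₂ => Relation.ReflTransGen.trans h₁ h₂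

structure IsRateMatrix {V : Type*} [Fintype V] (M : Matrix V V ℝ) : Prop where
  offDiag_nonneg : ∀ x y, x ≠ y → 0 ≤ M x y
  sum_row_eq_zero : ∀ x, ∑ y, M x y = 0

namespace IsRateMatrix

variable {V : Type*} [Fintype V] {M : Matrix V V ℝ}

theorem mulVec_one (hM : IsRateMatrix M) : M *ᵥ 1 = 0 := by
  funext x
  simpa [Matrix.mulVec, dotProduct] using hM.sum_row_eq_zero x

theorem mulVec_apply_eq_sum_sub (hM : IsRateMatrix M) (f : V → ℝ) (x : V) :
    (M *ᵥ f) x = ∑ y, M x y * (f y - f x) := by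
  simp [Matrix.mulVec, dotProduct, mul_sub, Finset.sum_sub_distrib, ← Finset.sum_mul,
    hM.sum_row_eq_zero x]

theorem mul_sub_nonneg_of_forall_le (hM : IsRateMatrix M) {f : V → ℝ} {x : V}
    (hmin : ∀ y, f x ≤ f y) (y : V) : 0 ≤ M x y * (f y - f x) := by
  rcases eq_or_ne x y with rfl | hxy
  · simp
  · exact mul_nonneg (hM.offDiag_nonneg x y hxy) (sub_nonneg.mpr (hmin y))

theorem mulVec_apply_nonneg_of_forall_le (hM : IsRateMatrix M) {f : V → ℝ} {x : V}
    (hmin : ∀ y, f x ≤ f y) : 0 ≤ (M *ᵥ f) x := by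
  rw [hM.mulVec_apply_eq_sum_sub]
  exact Finset.sum_nonneg fun y _ => hM.mul_sub_nonneg_of_forall_le hmin y

theorem apply_eq_of_forall_le (hM : IsRateMatrix M) {f : V → ℝ} {x y : V}
    (hmin : ∀ z, f x ≤ f z) (hx : (M *ᵥ f) x ≤ 0) (hxy : 0 < M x y) : f y = f x := by
  rw [hM.mulVec_apply_eq_sum_sub] at hx
  have hterms := (Finset.sum_eq_zero_iff_of_nonneg fun z _ =>
    hM.mul_sub_nonneg_of_forall_le hmin z).mp
    (hx.antisymm (Finset.sum_nonneg fun z _ => hM.mul_sub_nonneg_of_forall_le hmin z))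
  exact sub_eq_zero.mp ((mul_eq_zero.mp (hterms y (Finset.mem_univ y))).resolve_left hxy.ne')

theorem apply_eq_of_leadsTo (hM : IsRateMatrix M) {f : V → ℝ} {x y : V}
    (hmin : ∀ z, f x ≤ f z) (hsuper : ∀ z, f z = f x → (M *ᵥ f) z ≤ 0)
    (h : LeadsTo M x y) : f y = f x := by
  induction h with
  | refl => rfl
  | tail _ hbc ih =>
    exact (hM.apply_eq_of_forall_le (ih ▸ hmin) (hsuper _ ih) hbc).trans ih

theorem mulVec_ne_one [Nonempty V] (hM : IsRateMatrix M) (u : V → ℝ) : M *ᵥ u ≠ 1 := by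
  intro hu
  obtain ⟨x, hx⟩ := Finite.exists_max u
  have := hM.mulVec_apply_nonneg_of_forall_le (f := -u) (x := x) fun y => neg_le_neg (hx y)
  rw [Matrix.mulVec_neg, hu] at this
  norm_num at this

theorem ker_mulVecLin_eq_span_one (hM : IsRateMatrix M)
    (hrec : ∃! C : Set V, IsRecurrentClass M C) :
    LinearMap.ker M.mulVecLin = Submodule.span ℝ {1} := by
  obtain ⟨C, hC, huniq⟩ := hrec
  have hreach (x : V) : ∃ c ∈ C, LeadsTo M x c := by
    obtain ⟨D, hD, y, hy, hxy⟩ := exists_isRecurrentClass_leadsTo M x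
    exact ⟨y, huniq D hD ▸ hy, hxy⟩
  refine le_antisymm (fun h hh => ?_) ?_
  · rw [LinearMap.mem_ker, Matrix.mulVecLin_apply] at hh
    obtain ⟨c, -⟩ := hC.1
    have : Nonempty V := ⟨c⟩
    obtain ⟨x₀, hx₀⟩ := Finite.exists_max h
    obtain ⟨x₁, hx₁⟩ := Finite.exists_min h
    obtain ⟨c₀, hc₀, hx₀c₀⟩ := hreach x₀
    obtain ⟨c₁, hc₁, hx₁c₁⟩ := hreach x₁
    have hmin : h c₁ = h x₁ := hM.apply_eq_of_leadsTo hx₁ (fun z _ => by simp [hh]) hx₁c₁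
    have hmax : h c₁ = h x₀ := by
      simpa using hM.apply_eq_of_leadsTo (f := -h) (fun z => neg_le_neg (hx₀ z))
        (fun z _ => by simp [Matrix.mulVec_neg, hh]) (hx₀c₀.trans (hC.2.1 c₀ hc₀ c₁ hc₁))
    refine Submodule.mem_span_singleton.mpr ⟨h x₁, funext fun x => ?_⟩
    simp only [Pi.smul_apply, Pi.one_apply, smul_eq_mul, mul_one]
    linarith [hx₀ x, hx₁ x]
  · rw [Submodule.span_singleton_le_iff_mem, LinearMap.mem_ker, Matrix.mulVecLin_apply]
    exact hM.mulVec_one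

theorem eq_zero_of_vecMul_eq_zero (hM : IsRateMatrix M)
    (hrec : ∃! C : Set V, IsRecurrentClass M C) {w : V → ℝ} (hw : w ᵥ* M = 0)
    (hsum : ∑ x, w x = 0) : w = 0 := by
  have : Nonempty V := by
    obtain ⟨-, ⟨⟨x, -⟩, -⟩, -⟩ := hrec
    exact ⟨x⟩
  by_contra hw0
  set φ : Module.Dual ℝ (V → ℝ) := dotProductBilin ℝ ℝ w
  have hφ : φ ≠ 0 := fun h => hw0 (dotProduct_self_eq_zero.mp (LinearMap.congr_fun h w))
  have hle : LinearMap.range M.mulVecLin ≤ LinearMap.ker φ := by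
    rintro _ ⟨v, rfl⟩
    simp [φ, Matrix.dotProduct_mulVec, hw]
  have hker : Module.finrank ℝ (LinearMap.ker M.mulVecLin) = 1 := by
    rw [hM.ker_mulVecLin_eq_span_one hrec, finrank_span_singleton one_ne_zero]
  have hrange := LinearMap.finrank_range_add_finrank_ker M.mulVecLin
  have hφker := Module.Dual.finrank_ker_add_one_of_ne_zero hφ
  have heq := Submodule.eq_of_le_of_finrank_le hle (by omega)
  have hone : (1 : V → ℝ) ∈ LinearMap.ker φ := by
    simpa [φ, dotProduct_one] using hsum
  obtain ⟨u, hu⟩ := heq ▸ hone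
  exact hM.mulVec_ne_one u hu

end IsRateMatrix

theorem Matrix.vecMul_eq_sumElim_toBlocks {l m n o R : Type*} [Fintype l] [Fintype m]
    [NonUnitalNonAssocSemiring R] (v : l ⊕ m → R) (M : Matrix (l ⊕ m) (n ⊕ o) R) :
    v ᵥ* M = Sum.elim (v ∘ Sum.inl ᵥ* M.toBlocks₁₁ + v ∘ Sum.inr ᵥ* M.toBlocks₂₁)
      (v ∘ Sum.inl ᵥ* M.toBlocks₁₂ + v ∘ Sum.inr ᵥ* M.toBlocks₂₂) := by
  conv_lhs => rw [← M.fromBlocks_toBlocks, ← Sum.elim_comp_inl_inr v]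
  exact vecMul_fromBlocks _ _ _ _ _

theorem Matrix.mulVec_eq_sumElim_toBlocks {l m n o R : Type*} [Fintype n] [Fintype o]
    [NonUnitalNonAssocSemiring R] (M : Matrix (l ⊕ m) (n ⊕ o) R) (v : n ⊕ o → R) :
    M *ᵥ v = Sum.elim (M.toBlocks₁₁ *ᵥ v ∘ Sum.inl + M.toBlocks₁₂ *ᵥ v ∘ Sum.inr)
      (M.toBlocks₂₁ *ᵥ v ∘ Sum.inl + M.toBlocks₂₂ *ᵥ v ∘ Sum.inr) := by
  conv_lhs => rw [← M.fromBlocks_toBlocks, ← Sum.elim_comp_inl_inr v]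
  exact fromBlocks_mulVec _ _ _ _ _

section Absorbing

variable {A T : Type*} [Fintype A] [Fintype T] {Q0 Q1 : Matrix (A ⊕ T) (A ⊕ T) ℝ}

theorem vecMul_add_vecMul_eq_zero_iff (habs : ∀ a y, Q0 (Sum.inl a) y = 0)
    (p' p : A ⊕ T → ℝ) :
    p' ᵥ* Q0 + p ᵥ* Q1 = 0 ↔
      p' ∘ Sum.inr ᵥ* Q0.toBlocks₂₁ +
          (p ∘ Sum.inl ᵥ* Q1.toBlocks₁₁ + p ∘ Sum.inr ᵥ* Q1.toBlocks₂₁) = 0 ∧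
        p' ∘ Sum.inr ᵥ* Q0.toBlocks₂₂ +
          (p ∘ Sum.inl ᵥ* Q1.toBlocks₁₂ + p ∘ Sum.inr ᵥ* Q1.toBlocks₂₂) = 0 := by
  have h₁₁ : Q0.toBlocks₁₁ = 0 := by ext; exact habs _ _
  have h₁₂ : Q0.toBlocks₁₂ = 0 := by ext; exact habs _ _
  rw [vecMul_eq_sumElim_toBlocks, vecMul_eq_sumElim_toBlocks, h₁₁, h₁₂, ← Sum.elim_add_add,
    ← Sum.elim_zero_zero, Sum.elim_eq_iff]
  simp

variable [DecidableEq T]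

theorem IsRateMatrix.neg_toBlocks₂₂_inv_nonneg {Q : Matrix (A ⊕ T) (A ⊕ T) ℝ}
    (hQ : IsRateMatrix Q) (htrans : ∀ t, ∃ a, LeadsTo Q (Sum.inr t) (Sum.inl a))
    (hT : IsUnit Q.toBlocks₂₂) (s t : T) : 0 ≤ (-Q.toBlocks₂₂)⁻¹ s t := by
  have hdet : IsUnit (-Q.toBlocks₂₂).det := (isUnit_iff_isUnit_det _).mp hT.neg
  set z : T → ℝ := fun s => (-Q.toBlocks₂₂)⁻¹ s t
  set f : A ⊕ T → ℝ := Sum.elim 0 z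
  have hz : ∀ s, (Q.toBlocks₂₂ *ᵥ z) s ≤ 0 := fun s => calc
    (Q.toBlocks₂₂ *ᵥ z) s = -((-Q.toBlocks₂₂) * (-Q.toBlocks₂₂)⁻¹) s t := by
      simp [Matrix.mulVec, dotProduct, Matrix.mul_apply, z]
    _ = -(1 : Matrix T T ℝ) s t := by rw [mul_nonsing_inv _ hdet]
    _ ≤ 0 := by rw [one_apply]; split_ifs <;> norm_num
  have hsuper : ∀ s, (Q *ᵥ f) (Sum.inr s) ≤ 0 := fun s => by
    simpa [f, Matrix.mulVec_eq_sumElim_toBlocks] using hz s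
  -- `f` is superharmonic on `T` and vanishes on `A`, so a negative minimum of `f` would spread
  -- along a path from `T` into `A`.
  by_contra hneg
  have : Nonempty (A ⊕ T) := ⟨Sum.inr s⟩
  obtain ⟨x, hx⟩ := Finite.exists_min f
  have hfx : f x < 0 := (hx (Sum.inr s)).trans_lt (not_le.mp hneg)
  cases x with
  | inl a => exact hfx.false
  | inr i =>
    obtain ⟨a, hia⟩ := htrans i
    have hsuper' : ∀ y, f y = f (Sum.inr i) → (Q *ᵥ f) y ≤ 0
      | Sum.inl _, hy => (hy ▸ hfx).false.elim
      | Sum.inr s, _ => hsuper s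
    exact (hQ.apply_eq_of_leadsTo hx hsuper' hia ▸ hfx).false

theorem isRateMatrix_QAmat (hQ0 : IsRateMatrix Q0)
    (hQ1 : ∀ a y, Sum.inl a ≠ y → 0 ≤ Q1 (Sum.inl a) y)
    (hQ1sum : ∀ a, ∑ y, Q1 (Sum.inl a) y = 0) (hT0 : IsUnit Q0.toBlocks₂₂)
    (hN : ∀ s t, 0 ≤ (-Q0.toBlocks₂₂)⁻¹ s t) : IsRateMatrix (QAmat Q0 Q1) := by
  have hdet : IsUnit (-Q0.toBlocks₂₂).det := (isUnit_iff_isUnit_det _).mp hT0.neg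
  have hR0 : Q0.toBlocks₂₁ *ᵥ 1 = -Q0.toBlocks₂₂ *ᵥ 1 := by
    have h := hQ0.mulVec_one
    rw [Q0.mulVec_eq_sumElim_toBlocks, ← Sum.elim_zero_zero, Sum.elim_eq_iff] at h
    rw [neg_mulVec, eq_neg_iff_add_eq_zero]
    simpa using h.2
  have hA1 : Q1.toBlocks₁₁ *ᵥ 1 + Q1.toBlocks₁₂ *ᵥ 1 = 0 := funext fun a => by
    simpa [Matrix.mulVec, dotProduct, Fintype.sum_sum_type, toBlocks₁₁, toBlocks₁₂] using
      hQ1sum a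
  refine ⟨fun a b hab => add_nonneg (hQ1 a _ (by simpa using hab)) ?_, fun a => ?_⟩
  · exact Finset.sum_nonneg fun t _ => mul_nonneg
      (Finset.sum_nonneg fun s _ => mul_nonneg (hQ1 a _ (by simp)) (hN s t))
      (hQ0.offDiag_nonneg _ _ (by simp))
  · have h1 : QAmat Q0 Q1 *ᵥ 1 = 0 := by
      rw [QAmat, add_mulVec, ← mulVec_mulVec, hR0, mulVec_mulVec, Matrix.mul_assoc,
        nonsing_inv_mul _ hdet, Matrix.mul_one, hA1]
    simpa [Matrix.mulVec, dotProduct] using congrFun h1 a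

theorem comp_inr_eq_of_vecMul_add_vecMul_eq_zero (habs : ∀ a y, Q0 (Sum.inl a) y = 0)
    (hT0 : IsUnit Q0.toBlocks₂₂) {p' p : A ⊕ T → ℝ} (h : p' ᵥ* Q0 + p ᵥ* Q1 = 0) :
    p' ∘ Sum.inr = (p ∘ Sum.inl ᵥ* Q1.toBlocks₁₂ + p ∘ Sum.inr ᵥ* Q1.toBlocks₂₂) ᵥ*
      (-Q0.toBlocks₂₂)⁻¹ := by
  have hdet : IsUnit (-Q0.toBlocks₂₂).det := (isUnit_iff_isUnit_det _).mp hT0.neg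
  have hT := ((vecMul_add_vecMul_eq_zero_iff habs p' p).mp h).2
  calc p' ∘ Sum.inr = (p' ∘ Sum.inr ᵥ* -Q0.toBlocks₂₂) ᵥ* (-Q0.toBlocks₂₂)⁻¹ := by
        rw [vecMul_vecMul, mul_nonsing_inv _ hdet, vecMul_one]
    _ = _ := by rw [vecMul_neg, eq_neg_of_add_eq_zero_left hT, neg_neg]

theorem comp_inl_vecMul_QAmat_of_vecMul_add_vecMul_eq_zero
    (habs : ∀ a y, Q0 (Sum.inl a) y = 0) (hT0 : IsUnit Q0.toBlocks₂₂) {p' p : A ⊕ T → ℝ}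
    (h : p' ᵥ* Q0 + p ᵥ* Q1 = 0) :
    p ∘ Sum.inl ᵥ* QAmat Q0 Q1 =
      -(p ∘ Sum.inr ᵥ* (Q1.toBlocks₂₁ + Q1.toBlocks₂₂ * (-Q0.toBlocks₂₂)⁻¹ * Q0.toBlocks₂₁)) := by
  have hA := ((vecMul_add_vecMul_eq_zero_iff habs p' p).mp h).1
  rw [comp_inr_eq_of_vecMul_add_vecMul_eq_zero habs hT0 h] at hA
  simp only [QAmat, vecMul_add, add_vecMul, ← vecMul_vecMul] at hA ⊢
  linear_combination hA

end Absorbing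

section Perturbation

theorem nonneg_of_forall_add_mul_nonneg {a b r : ℝ} (hr : 0 < r)
    (h : ∀ ε, 0 < ε → ε < r → 0 ≤ a + ε * b) : 0 ≤ a := by
  have hcont : Continuous fun ε : ℝ => a + ε * b := by fun_prop
  have hlim : Tendsto (fun ε => a + ε * b) (𝓝[>] 0) (𝓝 a) :=
    (hcont.tendsto' 0 a (by simp)).mono_left nhdsWithin_le_nhds
  exact ge_of_tendsto hlim <| by
    filter_upwards [Ioo_mem_nhdsGT hr] with ε hε using h ε hε.1 hε.2

variable {V : Type*} [Fintype V]

theorem IsRateMatrix.of_forall_add_smul {Q0 Q1 : Matrix V V ℝ} {r : ℝ} (hr : 0 < r)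
    (h : ∀ ε, 0 < ε → ε < r → IsRateMatrix (Q0 + ε • Q1)) :
    IsRateMatrix Q0 ∧ ∀ x, ∑ y, Q1 x y = 0 := by
  have hsum (x : V) (ε : ℝ) (hε : 0 < ε) (hεr : ε < r) :
      ∑ y, Q0 x y + ε * ∑ y, Q1 x y = 0 := by
    simpa [Finset.sum_add_distrib, Finset.mul_sum] using (h ε hε hεr).sum_row_eq_zero x
  have hsum0 (x : V) : ∑ y, Q0 x y = 0 := le_antisymm
    (neg_nonneg.mp <| nonneg_of_forall_add_mul_nonneg (b := -∑ y, Q1 x y) hr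
      fun ε hε hεr => by linarith [hsum x ε hε hεr])
    (nonneg_of_forall_add_mul_nonneg hr fun ε hε hεr => (hsum x ε hε hεr).ge)
  refine ⟨⟨fun x y hxy => ?_, hsum0⟩, fun x => ?_⟩
  · refine nonneg_of_forall_add_mul_nonneg (b := Q1 x y) hr fun ε hε hεr => ?_
    simpa using (h ε hε hεr).offDiag_nonneg x y hxy
  · have := hsum x (r / 2) (by positivity) (by linarith)
    rw [hsum0, zero_add] at this
    exact (mul_eq_zero.mp this).resolve_left (by positivity)

variable {M0 M1 : Matrix V V ℝ} {p : ℕ → V → ℝ} {q : ℝ → V → ℝ} {r : ℝ}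

theorem vecMul_coeff_succ_add_vecMul_coeff_eq_zero (hr : 0 < r)
    (hser : ∀ ε, 0 < ε → ε < r → ∀ x, HasSum (fun k => ε ^ k * p k x) (q ε x))
    (hstat : ∀ ε, 0 < ε → ε < r → q ε ᵥ* (M0 + ε • M1) = 0) (n : ℕ) :
    p (n + 1) ᵥ* M0 + p n ᵥ* M1 = 0 := by
  have hvec (M : Matrix V V ℝ) (ε : ℝ) (hε : 0 < ε) (hεr : ε < r) :
      HasSum (fun k => ε ^ k • (p k ᵥ* M)) (q ε ᵥ* M) := by
    have hsum : HasSum (fun k => ε ^ k • p k) (q ε) := Pi.hasSum.mpr (hser ε hε hεr)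
    simpa [Function.comp_def, smul_vecMul] using
      hsum.map M.vecMulLinear (LinearMap.continuous_of_finiteDimensional _)
  exact add_eq_zero_of_hasSum_add_smul hr (hvec M0) (hvec M1)
    (fun ε hε hεr => by rw [← vecMul_smul, ← vecMul_add, hstat ε hε hεr]) n

theorem sum_coeff_succ_eq_zero (hr : 0 < r)
    (hser : ∀ ε, 0 < ε → ε < r → ∀ x, HasSum (fun k => ε ^ k * p k x) (q ε x))
    (hnorm : ∀ ε, 0 < ε → ε < r → ∑ x, q ε x = 1) (n : ℕ) : ∑ x, p (n + 1) x = 0 := by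
  have hc := eq_zero_of_hasSum_pow_mul_eq_zero
    (c := fun k => ∑ x, p k x - if k = 0 then 1 else 0) hr fun ε hε hεr => by
      have hp : HasSum (fun k => ε ^ k * ∑ x, p k x) 1 := by
        have := hasSum_sum (s := Finset.univ) fun x _ => hser ε hε hεr x
        rw [hnorm ε hε hεr] at this
        simpa [Finset.mul_sum] using this
      have hδ : HasSum (fun k => ε ^ k * if k = 0 then 1 else 0) 1 := by
        convert hasSum_single (f := fun k => ε ^ k * if k = 0 then (1 : ℝ) else 0) 0
          fun k hk => by simp [hk] using 1
        simp
      simpa [mul_sub] using hp.sub hδ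
  simpa using congrFun hc (n + 1)

end Perturbation

theorem stmt12_general {A T : Type*} [Fintype A] [Fintype T] [DecidableEq T]
    (ε₀ ε₁ : ℝ) (hε₀ : 0 < ε₀) (hε₁ : 0 < ε₁) (hε₁₀ : ε₁ ≤ ε₀)
    (Q0 Q1 : Matrix (A ⊕ T) (A ⊕ T) ℝ)
    (hQmat : ∀ ε : ℝ, 0 < ε → ε < ε₀ →
      (∀ x y, x ≠ y → 0 ≤ (Q0 + ε • Q1) x y) ∧ ∀ x, ∑ y, (Q0 + ε • Q1) x y = 0)
    (habs : ∀ a : A, ∀ y, Q0 (Sum.inl a) y = 0)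
    (htrans : ∀ t : T, ∃ a : A,
      Relation.ReflTransGen (fun u v => 0 < Q0 u v) (Sum.inr t) (Sum.inl a))
    (hT0 : IsUnit Q0.toBlocks₂₂)
    (hrec : ∃! C : Set A, IsRecurrentClass (QAmat Q0 Q1) C)
    (π : ℝ → (A ⊕ T) → ℝ)
    (hπ : ∀ ε : ℝ, 0 < ε → ε < ε₀ →
      (∀ x, 0 ≤ π ε x) ∧ (∑ x, π ε x = 1) ∧
      ∀ y, ∑ x, π ε x * (Q0 + ε • Q1) x y = 0)
    (πk : ℕ → (A ⊕ T) → ℝ)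
    (hser : ∀ ε : ℝ, 0 < ε → ε < ε₁ → ∀ x,
      HasSum (fun k : ℕ => ε ^ k * πk k x) (π ε x)) :
    ∀ k : ℕ, 1 ≤ k →
      ((fun t : T => πk k (Sum.inr t)) =
        ((fun a : A => πk (k - 1) (Sum.inl a)) ᵥ* Q1.toBlocks₁₂ +
         (fun t : T => πk (k - 1) (Sum.inr t)) ᵥ* Q1.toBlocks₂₂) ᵥ* (-Q0.toBlocks₂₂)⁻¹) ∧
      ((fun a : A => πk k (Sum.inl a)) ᵥ* QAmat Q0 Q1 =
        -((fun t : T => πk k (Sum.inr t)) ᵥ*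
            (Q1.toBlocks₂₁ + Q1.toBlocks₂₂ * (-Q0.toBlocks₂₂)⁻¹ * Q0.toBlocks₂₁))) ∧
      (∑ a : A, πk k (Sum.inl a) = -∑ t : T, πk k (Sum.inr t)) ∧
      ∀ v : A → ℝ,
        (v ᵥ* QAmat Q0 Q1 =
            -((fun t : T => πk k (Sum.inr t)) ᵥ*
                (Q1.toBlocks₂₁ + Q1.toBlocks₂₂ * (-Q0.toBlocks₂₂)⁻¹ * Q0.toBlocks₂₁)) ∧
          ∑ a : A, v a = -∑ t : T, πk k (Sum.inr t)) →
        v = fun a : A => πk k (Sum.inl a) := by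
  have hQ : ∀ ε, 0 < ε → ε < ε₀ → IsRateMatrix (Q0 + ε • Q1) := fun ε hε hεr =>
    ⟨(hQmat ε hε hεr).1, (hQmat ε hε hεr).2⟩
  obtain ⟨hQ0, hQ1sum⟩ := IsRateMatrix.of_forall_add_smul hε₀ hQ
  have hQ1 : ∀ a y, Sum.inl a ≠ y → 0 ≤ Q1 (Sum.inl a) y := fun a y hay => by
    simpa [habs, hε₀] using (hQ (ε₀ / 2) (by positivity) (by linarith)).offDiag_nonneg _ y hay
  have hQA : IsRateMatrix (QAmat Q0 Q1) := isRateMatrix_QAmat hQ0 hQ1 (fun a => hQ1sum _) hT0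
    (hQ0.neg_toBlocks₂₂_inv_nonneg htrans hT0)
  have hcoeff := vecMul_coeff_succ_add_vecMul_coeff_eq_zero hε₁ hser fun ε hε hεr =>
    funext (hπ ε hε (hεr.trans_le hε₁₀)).2.2
  have hsum := sum_coeff_succ_eq_zero hε₁ hser fun ε hε hεr => (hπ ε hε (hεr.trans_le hε₁₀)).2.1
  intro k hk
  obtain ⟨n, rfl⟩ := Nat.exists_eq_add_of_le' hk
  have hα := comp_inl_vecMul_QAmat_of_vecMul_add_vecMul_eq_zero habs hT0 (hcoeff (n + 1))
  have hsum' := hsum n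
  rw [Fintype.sum_sum_type] at hsum'
  refine ⟨comp_inr_eq_of_vecMul_add_vecMul_eq_zero habs hT0 (hcoeff n), hα,
    eq_neg_of_add_eq_zero_left hsum', fun v ⟨hv, hvsum⟩ => sub_eq_zero.mp ?_⟩
  refine hQA.eq_zero_of_vecMul_eq_zero hrec ?_ ?_
  · rw [sub_vecMul, hv]
    exact sub_eq_zero.mpr hα.symm
  · simp only [Pi.sub_apply, Finset.sum_sub_distrib, hvsum]
    linarith

/-- For a linear perturbation `Q(ε) = Q⁽⁰⁾ + ε Q⁽¹⁾` of generators on `𝒜 ⊕ 𝒯` (irreducible for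
`0 < ε < ε₀`, 𝒜 absorbing and 𝒯 transient for `Q⁽⁰⁾`, and `Q_𝒜` with a single recurrent
class), the coefficients of the stationary-distribution expansion
`π(ε) = Σ_k ε^k [α⁽ᵏ⁾, β⁽ᵏ⁾]` satisfy, for every `k ≥ 1`,
`β⁽ᵏ⁾ = (α⁽ᵏ⁻¹⁾ S₁ + β⁽ᵏ⁻¹⁾ T₁)(−T₀)⁻¹`, and `α⁽ᵏ⁾` is the unique vector solving
`α⁽ᵏ⁾ Q_𝒜 = −β⁽ᵏ⁾(R₁ + T₁(−T₀)⁻¹R₀)` together with `α⁽ᵏ⁾·𝟙 = −β⁽ᵏ⁾·𝟙`. -/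
theorem stmt12 {A T : Type*} [Fintype A] [Fintype T] [DecidableEq A] [DecidableEq T]
    [Nonempty A] [Nonempty T]
    (ε₀ ε₁ : ℝ) (hε₀ : 0 < ε₀) (hε₁ : 0 < ε₁) (hε₁₀ : ε₁ ≤ ε₀)
    (Q0 Q1 : Matrix (A ⊕ T) (A ⊕ T) ℝ)
    (hQmat : ∀ ε : ℝ, 0 < ε → ε < ε₀ →
      (∀ x y, x ≠ y → 0 ≤ (Q0 + ε • Q1) x y) ∧ ∀ x, ∑ y, (Q0 + ε • Q1) x y = 0)
    (hirr : ∀ ε : ℝ, 0 < ε → ε < ε₀ →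
      ∀ x y : A ⊕ T, Relation.ReflTransGen (fun a b => 0 < (Q0 + ε • Q1) a b) x y)
    (habs : ∀ a : A, ∀ y, Q0 (Sum.inl a) y = 0)
    (htrans : ∀ t : T, ∃ a : A,
      Relation.ReflTransGen (fun u v => 0 < Q0 u v) (Sum.inr t) (Sum.inl a))
    (hT0 : IsUnit Q0.toBlocks₂₂)
    (hrec : ∃! C : Set A, IsRecurrentClass (QAmat Q0 Q1) C)
    (π : ℝ → (A ⊕ T) → ℝ)
    (hπ : ∀ ε : ℝ, 0 < ε → ε < ε₀ →
      (∀ x, 0 ≤ π ε x) ∧ (∑ x, π ε x = 1) ∧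
      ∀ y, ∑ x, π ε x * (Q0 + ε • Q1) x y = 0)
    (πk : ℕ → (A ⊕ T) → ℝ)
    (hser : ∀ ε : ℝ, 0 < ε → ε < ε₁ → ∀ x,
      HasSum (fun k : ℕ => ε ^ k * πk k x) (π ε x)) :
    ∀ k : ℕ, 1 ≤ k →
      ((fun t : T => πk k (Sum.inr t)) =
        ((fun a : A => πk (k - 1) (Sum.inl a)) ᵥ* Q1.toBlocks₁₂ +
         (fun t : T => πk (k - 1) (Sum.inr t)) ᵥ* Q1.toBlocks₂₂) ᵥ* (-Q0.toBlocks₂₂)⁻¹) ∧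
      ((fun a : A => πk k (Sum.inl a)) ᵥ* QAmat Q0 Q1 =
        -((fun t : T => πk k (Sum.inr t)) ᵥ*
            (Q1.toBlocks₂₁ + Q1.toBlocks₂₂ * (-Q0.toBlocks₂₂)⁻¹ * Q0.toBlocks₂₁))) ∧
      (∑ a : A, πk k (Sum.inl a) = -∑ t : T, πk k (Sum.inr t)) ∧
      ∀ v : A → ℝ,
        (v ᵥ* QAmat Q0 Q1 =
            -((fun t : T => πk k (Sum.inr t)) ᵥ*
                (Q1.toBlocks₂₁ + Q1.toBlocks₂₂ * (-Q0.toBlocks₂₂)⁻¹ * Q0.toBlocks₂₁)) ∧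
          ∑ a : A, v a = -∑ t : T, πk k (Sum.inr t)) →
        v = fun a : A => πk k (Sum.inl a) :=
  stmt12_general ε₀ ε₁ hε₀ hε₁ hε₁₀ Q0 Q1 hQmat habs htrans hT0 hrec π hπ πk hser
end

section
/- For the 1D chromatin model: the birth–death chain on {0,…,D} (D ≥ 2) with rates λ_x^ε = (c x + ε c D)(D − x) and γ_x^ε = μ(c(D − x) + b ε c D) x (with constants c, μ, b > 0 and ε > 0), the stationary distribution π(ε) satisfies lim_{ε→0} π₀(ε) = b μ^D / (1 + b μ^D), lim_{ε→0} π_D(ε) = 1/(1 + b μ^D), and lim_{ε→0} π_x(ε) = 0 for all 0 < x < D. -/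
open Matrix Filter Topology

/-!
Any stationary vector of a birth–death generator satisfies detailed balance
`π_x λ_x = π_{x+1} γ_{x+1}`, so `π` is proportional to the weights `ρ_x = ∏_{i<x} λ_i / γ_{i+1}`.
As `ε → 0⁺` the birth rate `λ_0 = ε c D²` vanishes while the interior death rates stay positive,
so `ρ_x → 0` for `0 < x < D`. In `ρ_D` the vanishing rates `λ_0` and `γ_D = ε μ b c D²` cancel to
`1 / (μ b)`, and each remaining factor `λ_i / γ_i` tends to `1 / μ`, so `ρ_D → 1 / (b μ^D)`.
Normalising the limits `1, 0, …, 0, 1 / (b μ^D)` gives the claim.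
-/

/-- The generator of the 1D chromatin model: a birth–death chain on `{0,…,D}` with
birth rates `λ_x^ε = (c x + ε c D)(D − x)` and death rates
`γ_x^ε = μ (c (D − x) + b ε c D) x`. -/
noncomputable def chromGen (D : ℕ) (c μ b ε : ℝ) :
    Matrix (Fin (D + 1)) (Fin (D + 1)) ℝ :=
  Matrix.of fun x y =>
    if (y : ℕ) = (x : ℕ) + 1 then (c * (x : ℕ) + ε * c * D) * ((D : ℝ) - (x : ℕ))
    else if (y : ℕ) + 1 = (x : ℕ) then μ * (c * ((D : ℝ) - (x : ℕ)) + b * ε * c * D) * (x : ℕ)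
    else if x = y then
      -((c * (x : ℕ) + ε * c * D) * ((D : ℝ) - (x : ℕ))
        + μ * (c * ((D : ℝ) - (x : ℕ)) + b * ε * c * D) * (x : ℕ))
    else 0

open Finset

section BirthDeath

noncomputable def birthDeathGen (D : ℕ) (birth death : ℕ → ℝ) :
    Matrix (Fin (D + 1)) (Fin (D + 1)) ℝ :=
  Matrix.of fun x y =>
    if (y : ℕ) = x + 1 then birth x
    else if (y : ℕ) + 1 = x then death x
    else if x = y then -(birth x + death x)
    else 0

noncomputable def birthDeathWeight (birth death : ℕ → ℝ) (n : ℕ) : ℝ :=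
  ∏ i ∈ range n, birth i / death (i + 1)

variable {D : ℕ} {birth death : ℕ → ℝ} {v : Fin (D + 1) → ℝ}

lemma birthDeathGen_apply_of_not_adjacent {x y : Fin (D + 1)} (h₁ : (y : ℕ) ≠ x + 1)
    (h₂ : (y : ℕ) + 1 ≠ x) (h₃ : x ≠ y) : birthDeathGen D birth death x y = 0 := by
  simp [birthDeathGen, h₁, h₂, h₃]

lemma birthDeathGen_apply_succ (k : ℕ) (hk : k < D) :
    birthDeathGen D birth death ⟨k, by omega⟩ ⟨k + 1, by omega⟩ = birth k := by
  simp [birthDeathGen]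

lemma birthDeathGen_succ_apply (k : ℕ) (hk : k < D) :
    birthDeathGen D birth death ⟨k + 1, by omega⟩ ⟨k, by omega⟩ = death (k + 1) := by
  rw [birthDeathGen, of_apply, if_neg (by simp only; omega), if_pos rfl]

lemma birthDeathGen_apply_self (k : ℕ) (hk : k ≤ D) :
    birthDeathGen D birth death ⟨k, by omega⟩ ⟨k, by omega⟩ = -(birth k + death k) := by
  simp [birthDeathGen]

lemma vecMul_birthDeathGen_zero (hD : 0 < D) :
    (v ᵥ* birthDeathGen D birth death) ⟨0, by omega⟩
      = v ⟨1, by omega⟩ * death 1 - v ⟨0, by omega⟩ * (birth 0 + death 0) := by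
  rw [vecMul, dotProduct, Fintype.sum_eq_add ⟨1, by omega⟩ ⟨0, by omega⟩ (by simp [Fin.ext_iff])]
  · rw [birthDeathGen_succ_apply 0 hD, birthDeathGen_apply_self 0 hD.le]
    ring
  · rintro x ⟨hx₁, hx₀⟩
    rw [birthDeathGen_apply_of_not_adjacent (by simp) (by simpa [Fin.ext_iff, eq_comm] using hx₁)
      hx₀, mul_zero]

lemma vecMul_birthDeathGen_succ {k : ℕ} (hk : k + 1 < D) :
    (v ᵥ* birthDeathGen D birth death) ⟨k + 1, by omega⟩
      = v ⟨k, by omega⟩ * birth k - v ⟨k + 1, by omega⟩ * (birth (k + 1) + death (k + 1))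
        + v ⟨k + 2, by omega⟩ * death (k + 2) := by
  rw [vecMul, dotProduct, ← sum_subset (subset_univ
    {⟨k, by omega⟩, ⟨k + 1, by omega⟩, ⟨k + 2, by omega⟩}), sum_insert (by simp [Fin.ext_iff]),
    sum_pair (by simp [Fin.ext_iff])]
  · rw [birthDeathGen_apply_succ k (by omega), birthDeathGen_apply_self (k + 1) hk.le,
      birthDeathGen_succ_apply (k + 1) hk]
    ring
  · intro x _ hx
    simp only [mem_insert, mem_singleton, Fin.ext_iff, not_or] at hx
    obtain ⟨hx₀, hx₁, hx₂⟩ := hx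
    rw [birthDeathGen_apply_of_not_adjacent (by simp only; omega) (by simp only; omega)
      (by rw [Ne, Fin.ext_iff]; simp only; omega), mul_zero]

theorem birthDeathGen_detailed_balance (hdeath : death 0 = 0)
    (hv : v ᵥ* birthDeathGen D birth death = 0) :
    ∀ k (hk : k < D), v ⟨k, by omega⟩ * birth k = v ⟨k + 1, by omega⟩ * death (k + 1) := by
  intro k
  induction k with
  | zero =>
    intro hk
    have h₀ := congrFun hv ⟨0, by omega⟩
    rw [Pi.zero_apply, vecMul_birthDeathGen_zero hk, hdeath] at h₀
    linear_combination -h₀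
  | succ k ih =>
    intro hk
    have hk' := congrFun hv ⟨k + 1, by omega⟩
    rw [Pi.zero_apply, vecMul_birthDeathGen_succ hk] at hk'
    linear_combination ih (by omega) - hk'

lemma birthDeathWeight_succ (n : ℕ) :
    birthDeathWeight birth death (n + 1)
      = birthDeathWeight birth death n * (birth n / death (n + 1)) :=
  prod_range_succ _ n

theorem eq_mul_birthDeathWeight_of_vecMul_eq_zero (hdeath₀ : death 0 = 0)
    (hdeath : ∀ i, 0 < i → i ≤ D → death i ≠ 0) (hv : v ᵥ* birthDeathGen D birth death = 0) :
    ∀ n (hn : n ≤ D), v ⟨n, by omega⟩ = v 0 * birthDeathWeight birth death n := by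
  intro n
  induction n with
  | zero => simp [birthDeathWeight]
  | succ n ih =>
    intro hn
    have hbal := birthDeathGen_detailed_balance hdeath₀ hv n hn
    rw [birthDeathWeight_succ, ← mul_assoc, ← ih (by omega), mul_div_assoc', hbal,
      mul_div_cancel_right₀ _ (hdeath (n + 1) n.succ_pos hn)]

theorem eq_birthDeathWeight_div_of_vecMul_eq_zero (hdeath₀ : death 0 = 0)
    (hdeath : ∀ i, 0 < i → i ≤ D → death i ≠ 0) (hv : v ᵥ* birthDeathGen D birth death = 0)
    (hsum : ∑ x, v x = 1) (x : Fin (D + 1)) :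
    v x = birthDeathWeight birth death x / ∑ n ∈ range (D + 1), birthDeathWeight birth death n := by
  have hweight : ∀ y : Fin (D + 1), v y = v 0 * birthDeathWeight birth death y :=
    fun y => eq_mul_birthDeathWeight_of_vecMul_eq_zero hdeath₀ hdeath hv y y.is_le
  have hnorm : v 0 * ∑ n ∈ range (D + 1), birthDeathWeight birth death n = 1 := by
    rw [mul_sum, ← Fin.sum_univ_eq_sum_range (fun n => v 0 * birthDeathWeight birth death n),
      ← hsum]
    exact sum_congr rfl fun y _ => (hweight y).symm
  rw [hweight x, eq_div_iff (right_ne_zero_of_mul_eq_one hnorm), mul_right_comm, hnorm, one_mul]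

end BirthDeath

section Chromatin

noncomputable def chromBirth (D : ℕ) (c ε : ℝ) (x : ℕ) : ℝ :=
  (c * x + ε * c * D) * ((D : ℝ) - x)

noncomputable def chromDeath (D : ℕ) (c μ b ε : ℝ) (x : ℕ) : ℝ :=
  μ * (c * ((D : ℝ) - x) + b * ε * c * D) * x

noncomputable def chromWeight (D : ℕ) (c μ b ε : ℝ) (n : ℕ) : ℝ :=
  birthDeathWeight (chromBirth D c ε) (chromDeath D c μ b ε) n

lemma chromGen_eq_birthDeathGen (D : ℕ) (c μ b ε : ℝ) :
    chromGen D c μ b ε = birthDeathGen D (chromBirth D c ε) (chromDeath D c μ b ε) := rfl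

variable {D : ℕ} {c μ b : ℝ}

lemma chromDeath_pos (hc : 0 < c) (hμ : 0 < μ) (hb : 0 < b) {ε : ℝ} (hε : 0 < ε) {i : ℕ}
    (hi₀ : 0 < i) (hiD : i ≤ D) : 0 < chromDeath D c μ b ε i := by
  have hi : (0 : ℝ) < i := by exact_mod_cast hi₀
  have hiD' : (i : ℝ) ≤ D := by exact_mod_cast hiD
  have hD : (0 : ℝ) < D := hi.trans_le hiD'
  exact mul_pos (mul_pos hμ (add_pos_of_nonneg_of_pos (mul_nonneg hc.le (by linarith))
    (by positivity))) hi

lemma chromBirth_zero_pos (hc : 0 < c) {i : ℕ} (hi₀ : 0 < i) (hiD : i < D) :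
    0 < chromBirth D c 0 i := by
  have hi : (0 : ℝ) < i := by exact_mod_cast hi₀
  have hiD' : (i : ℝ) < D := by exact_mod_cast hiD
  unfold chromBirth
  exact mul_pos (by nlinarith) (by linarith)

lemma chromDeath_zero (i : ℕ) :
    chromDeath D c μ b 0 i = μ * chromBirth D c 0 i := by
  simp only [chromDeath, chromBirth]
  ring

lemma continuousAt_chromBirth_div_chromDeath (hc : 0 < c) (hμ : 0 < μ) (i : ℕ) {j : ℕ}
    (hj₀ : 0 < j) (hjD : j < D) :
    ContinuousAt (fun ε => chromBirth D c ε i / chromDeath D c μ b ε j) 0 := by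
  refine ContinuousAt.div (by unfold chromBirth; fun_prop) (by unfold chromDeath; fun_prop) ?_
  rw [chromDeath_zero]
  exact (mul_pos hμ (chromBirth_zero_pos hc hj₀ hjD)).ne'

lemma tendsto_chromWeight_of_pos_of_lt (hc : 0 < c) (hμ : 0 < μ) {n : ℕ} (hn₀ : 0 < n)
    (hnD : n < D) : Tendsto (fun ε => chromWeight D c μ b ε n) (𝓝[>] 0) (𝓝 0) := by
  have hcont : ContinuousAt (fun ε => chromWeight D c μ b ε n) 0 :=
    tendsto_finsetProd (range n) fun i hi =>
      continuousAt_chromBirth_div_chromDeath hc hμ i i.succ_pos (by rw [mem_range] at hi; omega)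
  -- at `ε = 0` the chain cannot leave the state `0`
  have hzero : chromWeight D c μ b 0 n = 0 :=
    prod_eq_zero (mem_range.2 hn₀) (by simp [chromBirth])
  simpa [hzero] using hcont.tendsto.mono_left nhdsWithin_le_nhds

lemma chromWeight_last {ε : ℝ} (hε : ε ≠ 0) (hb : b ≠ 0) (hμ : μ ≠ 0) (hc : c ≠ 0) (m : ℕ) :
    chromWeight (m + 1) c μ b ε (m + 1)
      = (μ * b)⁻¹ * ∏ i ∈ range m,
          chromBirth (m + 1) c ε (i + 1) / chromDeath (m + 1) c μ b ε (i + 1) := by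
  have hend : chromBirth (m + 1) c ε 0 / chromDeath (m + 1) c μ b ε (m + 1) = (μ * b)⁻¹ := by
    simp only [chromBirth, chromDeath]
    push_cast
    field_simp
    ring
  rw [chromWeight, birthDeathWeight, prod_div_distrib, prod_range_succ', prod_range_succ,
    mul_div_mul_comm, hend, prod_div_distrib, mul_comm]

lemma tendsto_chromWeight_last (hc : 0 < c) (hμ : 0 < μ) (hb : 0 < b) (hD : 0 < D) :
    Tendsto (fun ε => chromWeight D c μ b ε D) (𝓝[>] 0) (𝓝 (b * μ ^ D)⁻¹) := by
  obtain ⟨m, rfl⟩ : ∃ m, D = m + 1 := ⟨D - 1, by omega⟩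
  have hcont : ContinuousAt (fun ε => ∏ i ∈ range m,
      chromBirth (m + 1) c ε (i + 1) / chromDeath (m + 1) c μ b ε (i + 1)) 0 :=
    tendsto_finsetProd (range m) fun i hi =>
      continuousAt_chromBirth_div_chromDeath hc hμ (i + 1) i.succ_pos
        (by rw [mem_range] at hi; omega)
  have hvalue : ∏ i ∈ range m,
      chromBirth (m + 1) c 0 (i + 1) / chromDeath (m + 1) c μ b 0 (i + 1) = μ⁻¹ ^ m := by
    rw [prod_congr rfl fun i hi => ?_, prod_const, card_range]
    rw [mem_range] at hi
    rw [chromDeath_zero, div_mul_cancel_right₀ (chromBirth_zero_pos hc i.succ_pos (by omega)).ne']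
  have hlimit : (μ * b)⁻¹ * μ⁻¹ ^ m = (b * μ ^ (m + 1))⁻¹ := by
    rw [inv_pow, ← mul_inv, pow_succ]
    ring
  rw [← hlimit, ← hvalue]
  refine (tendsto_const_nhds.mul (hcont.tendsto.mono_left nhdsWithin_le_nhds)).congr' ?_
  filter_upwards [self_mem_nhdsWithin] with ε hε
  exact (chromWeight_last (ne_of_gt hε) hb.ne' hμ.ne' hc.ne' m).symm

noncomputable def chromWeightLimit (D : ℕ) (μ b : ℝ) (n : ℕ) : ℝ :=
  if n = 0 then 1 else if n = D then (b * μ ^ D)⁻¹ else 0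

lemma tendsto_chromWeight (hc : 0 < c) (hμ : 0 < μ) (hb : 0 < b) (hD : 0 < D) {n : ℕ}
    (hn : n ≤ D) :
    Tendsto (fun ε => chromWeight D c μ b ε n) (𝓝[>] 0) (𝓝 (chromWeightLimit D μ b n)) := by
  rcases Nat.eq_zero_or_pos n with rfl | hn₀
  · simp [chromWeightLimit, chromWeight, birthDeathWeight]
  rcases hn.eq_or_lt with rfl | hnD
  · simpa [chromWeightLimit, hn₀.ne'] using tendsto_chromWeight_last hc hμ hb hn₀
  · simpa [chromWeightLimit, hn₀.ne', hnD.ne] using tendsto_chromWeight_of_pos_of_lt hc hμ hn₀ hnD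

lemma sum_chromWeightLimit (hD : 0 < D) :
    ∑ n ∈ range (D + 1), chromWeightLimit D μ b n = 1 + (b * μ ^ D)⁻¹ := by
  obtain ⟨m, rfl⟩ : ∃ m, D = m + 1 := ⟨D - 1, by omega⟩
  rw [sum_range_succ, sum_range_succ', sum_eq_zero fun i hi => ?_]
  · simp [chromWeightLimit]
  · rw [mem_range] at hi
    simp [chromWeightLimit, hi.ne]

theorem eq_chromWeight_div_sum_of_vecMul_eq_zero (hc : 0 < c) (hμ : 0 < μ) (hb : 0 < b)
    {ε : ℝ} (hε : 0 < ε) {v : Fin (D + 1) → ℝ} (hv : v ᵥ* chromGen D c μ b ε = 0)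
    (hsum : ∑ x, v x = 1) (x : Fin (D + 1)) :
    v x = chromWeight D c μ b ε x / ∑ n ∈ range (D + 1), chromWeight D c μ b ε n := by
  rw [chromGen_eq_birthDeathGen] at hv
  exact eq_birthDeathWeight_div_of_vecMul_eq_zero (by simp [chromDeath])
    (fun _ hi₀ hiD => (chromDeath_pos hc hμ hb hε hi₀ hiD).ne') hv hsum x

end Chromatin

/-- For the 1D chromatin model on `{0,…,D}` (`D ≥ 2`), the stationary distribution `π(ε)`
of the (irreducible, for `ε > 0`) birth–death chain satisfies
`π₀(ε) → bμ^D/(1 + bμ^D)`, `π_D(ε) → 1/(1 + bμ^D)` and `π_x(ε) → 0` for `0 < x < D`,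
as `ε → 0⁺`. -/
theorem stmt17 (D : ℕ) (hD : 2 ≤ D) (c μ b : ℝ) (hc : 0 < c) (hμ : 0 < μ) (hb : 0 < b)
    (π : ℝ → Fin (D + 1) → ℝ)
    (hπ : ∀ ε : ℝ, 0 < ε →
      (∀ x, 0 ≤ π ε x) ∧ (∑ x, π ε x = 1) ∧
      ∀ y : Fin (D + 1), ∑ x : Fin (D + 1), π ε x * chromGen D c μ b ε x y = 0) :
    Tendsto (fun ε => π ε 0) (𝓝[>] (0 : ℝ)) (𝓝 (b * μ ^ D / (1 + b * μ ^ D))) ∧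
    Tendsto (fun ε => π ε (Fin.last D)) (𝓝[>] (0 : ℝ)) (𝓝 (1 / (1 + b * μ ^ D))) ∧
    ∀ x : Fin (D + 1), 0 < (x : ℕ) → (x : ℕ) < D →
      Tendsto (fun ε => π ε x) (𝓝[>] (0 : ℝ)) (𝓝 0) := by
  have hD₀ : 0 < D := by omega
  have hsum : Tendsto (fun ε => ∑ n ∈ range (D + 1), chromWeight D c μ b ε n) (𝓝[>] 0)
      (𝓝 (1 + (b * μ ^ D)⁻¹)) := by
    rw [← sum_chromWeightLimit hD₀]
    exact tendsto_finsetSum _ fun n hn => tendsto_chromWeight hc hμ hb hD₀ (mem_range_succ_iff.1 hn)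
  have hlim : ∀ x : Fin (D + 1), Tendsto (fun ε => π ε x) (𝓝[>] 0)
      (𝓝 (chromWeightLimit D μ b x / (1 + (b * μ ^ D)⁻¹))) := by
    intro x
    refine ((tendsto_chromWeight hc hμ hb hD₀ x.is_le).div hsum (by positivity)).congr' ?_
    filter_upwards [self_mem_nhdsWithin] with ε hε
    obtain ⟨-, hnorm, hstat⟩ := hπ ε hε
    exact (eq_chromWeight_div_sum_of_vecMul_eq_zero hc hμ hb hε (funext hstat) hnorm x).symm
  have hbμ : b * μ ^ D ≠ 0 := by positivity
  refine ⟨?_, ?_, fun x hx₀ hxD => ?_⟩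
  · convert hlim 0 using 2
    rw [Fin.val_zero, chromWeightLimit, if_pos rfl]
    field_simp
    ring
  · convert hlim (Fin.last D) using 2
    rw [Fin.val_last, chromWeightLimit, if_neg hD₀.ne', if_pos rfl]
    field_simp
    ring
  · convert hlim x using 2
    rw [chromWeightLimit, if_neg hx₀.ne', if_neg hxD.ne, zero_div]
end

section
/- Let Q be an infinitesimal generator on a finite set 𝒴 with |Q_{y,y}| ≤ λ for all y, let P̆ = I + Q/λ be the associated discrete-time transition matrix, Π̆ its ergodic (Cesàro) projection, and H̆ = (I − P̆ + Π̆)⁻¹ − Π̆ its deviation matrix. Then Π̆ Q = 0, the matrix −Q + Π̆ is invertible, and (1/λ) H̆ = (−Q + Π̆)⁻¹ − Π̆. -/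
open Matrix Filter Topology

/-! `P = 1 + Q/λ` is row-stochastic, so its powers are bounded and the Cesàro means
`Π_N = (N+1)⁻¹ ∑_{n ≤ N} Pⁿ` satisfy `Π_N (P - 1) = (P^{N+1} - 1)/(N+1) → 0`; in the limit
`Π P = P Π = Π`, and `X Π = X` whenever `X P = X`. If `X (1 - P + Π) = 0`, multiplying on the
right by `Π` gives `X Π = 0`, hence `X P = X` and `X = X Π = 0`; in the Artinian ring of matrices
this makes `B = 1 - P + Π` invertible. Finally `-Q + Π = λ B + (1 - λ) Π` with `Π` idempotent and
`B⁻¹ Π = Π B⁻¹ = Π`, so `(-Q + Π)⁻¹ = λ⁻¹ B⁻¹ + (1 - λ⁻¹) Π`. -/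

noncomputable def powCesaroMean {R : Type*} [Ring R] [Algebra ℝ R] (a : R) (N : ℕ) : R :=
  ((N : ℝ) + 1)⁻¹ • ∑ n ∈ Finset.range (N + 1), a ^ n

section PowCesaroMean

variable {R : Type*} [Ring R] [Algebra ℝ R]

lemma commute_powCesaroMean (a : R) (N : ℕ) : Commute a (powCesaroMean a N) :=
  (Commute.sum_right _ _ _ fun n _ => Commute.self_pow a n).smul_right _

lemma powCesaroMean_mul_sub_one (a : R) (N : ℕ) :
    powCesaroMean a N * (a - 1) = ((N : ℝ) + 1)⁻¹ • (a ^ (N + 1) - 1) := by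
  rw [powCesaroMean, smul_mul_assoc, geom_sum_mul]

lemma mul_powCesaroMean_of_mul_eq_self {a x : R} (hx : x * a = x) (N : ℕ) :
    x * powCesaroMean a N = x := by
  have hpow : ∀ n, x * a ^ n = x := fun n => by
    induction n with
    | zero => rw [pow_zero, mul_one]
    | succ n ih => rw [pow_succ, ← mul_assoc, ih, hx]
  rw [powCesaroMean, mul_smul_comm, Finset.mul_sum, Finset.sum_congr rfl fun n _ => hpow n,
    Finset.sum_const, Finset.card_range, ← Nat.cast_smul_eq_nsmul ℝ, smul_smul, Nat.cast_succ,
    inv_mul_cancel₀ (by positivity), one_smul]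

variable [TopologicalSpace R] [IsTopologicalRing R] {a p : R}

lemma tendsto_powCesaroMean_mul_sub_one [ContinuousSMul ℝ R]
    (ha : Tendsto (fun n : ℕ => (n : ℝ)⁻¹ • a ^ n) atTop (𝓝 0)) :
    Tendsto (fun N => powCesaroMean a N * (a - 1)) atTop (𝓝 0) := by
  have hinv : Tendsto (fun N : ℕ => ((N : ℝ) + 1)⁻¹) atTop (𝓝 0) := by
    simpa only [one_div] using tendsto_one_div_add_atTop_nhds_zero_nat (𝕜 := ℝ)
  have hpow : Tendsto (fun N : ℕ => ((N : ℝ) + 1)⁻¹ • a ^ (N + 1)) atTop (𝓝 0) := by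
    simpa only [Nat.cast_succ] using (tendsto_add_atTop_iff_nat 1).2 ha
  simpa only [powCesaroMean_mul_sub_one, smul_sub, sub_zero, zero_smul]
    using hpow.sub (hinv.smul_const 1)

variable [T2Space R]

lemma mul_eq_of_tendsto_powCesaroMean [ContinuousSMul ℝ R]
    (hp : Tendsto (powCesaroMean a) atTop (𝓝 p))
    (ha : Tendsto (fun n : ℕ => (n : ℝ)⁻¹ • a ^ n) atTop (𝓝 0)) : p * a = p := by
  have := tendsto_nhds_unique (hp.mul_const (a - 1)) (tendsto_powCesaroMean_mul_sub_one ha)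
  rwa [mul_sub, mul_one, sub_eq_zero] at this

lemma commute_of_tendsto_powCesaroMean (hp : Tendsto (powCesaroMean a) atTop (𝓝 p)) :
    Commute a p :=
  tendsto_nhds_unique (hp.const_mul a) <| by
    simpa only [(commute_powCesaroMean a _).eq] using hp.mul_const a

lemma mul_eq_self_of_tendsto_powCesaroMean (hp : Tendsto (powCesaroMean a) atTop (𝓝 p))
    {x : R} (hx : x * a = x) : x * p = x :=
  tendsto_nhds_unique (hp.const_mul x) <| by
    simpa only [mul_powCesaroMean_of_mul_eq_self hx] using tendsto_const_nhds

end PowCesaroMean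

section Deviation

variable {R : Type*} [Ring R] {a p : R}

lemma one_sub_add_mul_of_mul_eq (hap : a * p = p) (hpp : p * p = p) : (1 - a + p) * p = p := by
  rw [add_mul, sub_mul, one_mul, hap, hpp, sub_self, zero_add]

lemma mul_one_sub_add_of_mul_eq (hpa : p * a = p) (hpp : p * p = p) : p * (1 - a + p) = p := by
  rw [mul_add, mul_sub, mul_one, hpa, hpp, sub_self, zero_add]

lemma isRightRegular_one_sub_add (hap : a * p = p) (hpp : p * p = p)
    (hfix : ∀ x, x * a = x → x * p = x) : IsRightRegular (1 - a + p) := by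
  refine isRightRegular_iff_left_eq_zero_of_mul.2 fun x hx => ?_
  have hxp : x * p = 0 := by
    rw [← one_sub_add_mul_of_mul_eq hap hpp, ← mul_assoc, hx, zero_mul]
  have hxa : x * a = x := by
    rwa [mul_add, hxp, add_zero, mul_sub, mul_one, sub_eq_zero, eq_comm] at hx
  rw [← hfix x hxa, hxp]

variable {𝕜 : Type*} [Field 𝕜] [Algebra 𝕜 R]

lemma isUnit_and_ringInverse_smul_one_sub_add (hpa : p * a = p) (hap : a * p = p) (hpp : p * p = p)
    (hB : IsUnit (1 - a + p)) {c : 𝕜} (hc : c ≠ 0) :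
    IsUnit (c • (1 - a) + p) ∧
      Ring.inverse (c • (1 - a) + p) = c⁻¹ • Ring.inverse (1 - a + p) + (1 - c⁻¹) • p := by
  have hpB := mul_one_sub_add_of_mul_eq hpa hpp
  have hBp := one_sub_add_mul_of_mul_eq hap hpp
  have hBb := Ring.mul_inverse_cancel _ hB
  have hbB := Ring.inverse_mul_cancel _ hB
  have hX : c • (1 - a) + p = c • (1 - a + p) + (1 - c) • p := by module
  generalize 1 - a + p = B at *
  generalize Ring.inverse B = b at *
  have hpb : p * b = p := by rw [← hpB, mul_assoc, hBb, mul_one, hpB]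
  have hbp : b * p = p := by rw [← hBp, ← mul_assoc, hbB, one_mul, hBp]
  have hXY : (c • B + (1 - c) • p) * (c⁻¹ • b + (1 - c⁻¹) • p) = 1 := by
    simp only [add_mul, mul_add, smul_mul_assoc, mul_smul_comm, hBb, hBp, hpb, hpp]
    match_scalars <;> field_simp
    ring
  have hYX : (c⁻¹ • b + (1 - c⁻¹) • p) * (c • B + (1 - c) • p) = 1 := by
    simp only [add_mul, mul_add, smul_mul_assoc, mul_smul_comm, hbB, hpB, hbp, hpp]
    match_scalars <;> field_simp
    ring
  let u : Rˣ := ⟨_, _, hXY, hYX⟩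
  rw [hX]
  exact ⟨u.isUnit, Ring.inverse_unit u⟩

end Deviation

namespace Matrix

variable {n : Type*} [Fintype n] [DecidableEq n]

lemma one_add_inv_smul_mem_rowStochastic {Q : Matrix n n ℝ} {lam : ℝ} (hlam : 0 < lam)
    (hoff : ∀ x y, x ≠ y → 0 ≤ Q x y) (hrow : ∀ x, ∑ y, Q x y = 0)
    (hdiag : ∀ y, |Q y y| ≤ lam) :
    1 + lam⁻¹ • Q ∈ rowStochastic ℝ n := by
  refine mem_rowStochastic_iff_sum.2 ⟨fun x y => ?_, fun x => ?_⟩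
  · rcases eq_or_ne x y with rfl | hxy
    · have : -1 ≤ Q x x / lam := by
        rw [le_div_iff₀ hlam]
        linarith [(abs_le.1 (hdiag x)).1]
      rw [add_apply, one_apply_eq, smul_apply, smul_eq_mul, inv_mul_eq_div]
      linarith
    · rw [add_apply, one_apply_ne hxy, smul_apply, smul_eq_mul, zero_add]
      exact mul_nonneg (inv_nonneg.2 hlam.le) (hoff x y hxy)
  · simp only [add_apply, smul_apply, smul_eq_mul, Finset.sum_add_distrib, ← Finset.mul_sum,
      hrow, mul_zero, add_zero, one_apply, Finset.sum_ite_eq, Finset.mem_univ, if_true]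

lemma tendsto_inv_smul_pow_of_mem_rowStochastic {M : Matrix n n ℝ}
    (hM : M ∈ rowStochastic ℝ n) :
    Tendsto (fun k : ℕ => (k : ℝ)⁻¹ • M ^ k) atTop (𝓝 0) := by
  refine tendsto_pi_nhds.2 fun i => tendsto_pi_nhds.2 fun j => ?_
  have hinv : Tendsto (fun k : ℕ => (k : ℝ)⁻¹) atTop (𝓝 0) :=
    tendsto_inv_atTop_zero.comp tendsto_natCast_atTop_atTop
  have hbdd : IsBoundedUnder (· ≤ ·) atTop fun k => ‖(M ^ k) i j‖ :=
    isBoundedUnder_of ⟨1, fun k => by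
      have hMk := pow_mem hM k
      rw [Real.norm_of_nonneg (nonneg_of_mem_rowStochastic hMk)]
      exact le_one_of_mem_rowStochastic hMk⟩
  simpa using hinv.zero_mul_isBoundedUnder_le hbdd

end Matrix

theorem stmt18_general {V : Type*} [Fintype V] [DecidableEq V]
    (Q : Matrix V V ℝ) (lam : ℝ) (hlam : 0 < lam)
    (hoff : ∀ x y, x ≠ y → 0 ≤ Q x y) (hrow : ∀ x, ∑ y, Q x y = 0)
    (hdiag : ∀ y, |Q y y| ≤ lam)
    (P : Matrix V V ℝ) (hP : P = 1 + lam⁻¹ • Q)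
    (Proj : Matrix V V ℝ)
    (hProj : ∀ x y, Tendsto
      (fun N : ℕ => (1 / ((N : ℝ) + 1)) * ∑ n ∈ Finset.range (N + 1), (P ^ n) x y)
      atTop (𝓝 (Proj x y))) :
    Proj * Q = 0 ∧ IsUnit (-Q + Proj) ∧
    lam⁻¹ • ((1 - P + Proj)⁻¹ - Proj) = (-Q + Proj)⁻¹ - Proj := by
  have hstoch : P ∈ rowStochastic ℝ V :=
    hP ▸ one_add_inv_smul_mem_rowStochastic hlam hoff hrow hdiag
  have hmean : Tendsto (powCesaroMean P) atTop (𝓝 Proj) :=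
    tendsto_pi_nhds.2 fun x => tendsto_pi_nhds.2 fun y => by
      simpa [powCesaroMean, one_div, Matrix.sum_apply] using hProj x y
  have hProjP : Proj * P = Proj :=
    mul_eq_of_tendsto_powCesaroMean hmean (tendsto_inv_smul_pow_of_mem_rowStochastic hstoch)
  have hPProj : P * Proj = Proj := (commute_of_tendsto_powCesaroMean hmean).eq.trans hProjP
  have hfix : ∀ X, X * P = X → X * Proj = X :=
    fun _ => mul_eq_self_of_tendsto_powCesaroMean hmean
  have hidem : Proj * Proj = Proj := hfix Proj hProjP
  have hB : IsUnit (1 - P + Proj) := IsArtinianRing.isUnit_iff_isRightRegular.2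
    (isRightRegular_one_sub_add hPProj hidem hfix)
  have hQ : -Q = lam • (1 - P) := by
    rw [hP, sub_add_cancel_left, smul_neg, smul_smul, mul_inv_cancel₀ hlam.ne', one_smul]
  obtain ⟨hunit, hinv⟩ := isUnit_and_ringInverse_smul_one_sub_add hProjP hPProj hidem hB hlam.ne'
  refine ⟨?_, hQ ▸ hunit, ?_⟩
  · rw [← neg_neg Q, hQ, mul_neg, mul_smul_comm, mul_sub, mul_one, hProjP, sub_self, smul_zero,
      neg_zero]
  · rw [nonsing_inv_eq_ringInverse, nonsing_inv_eq_ringInverse, hQ, hinv]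
    module

/-- Let `Q` be a Q-matrix on a finite set with `|Q y y| ≤ λ`, let `P = I + Q/λ` be the
associated discrete-time transition matrix, let `Proj` be its ergodic (Cesàro) projection
`lim_N (N+1)⁻¹ Σ_{n≤N} P^n`, and let `H = (I − P + Proj)⁻¹ − Proj` be the deviation matrix.
Then `Proj Q = 0`, the matrix `−Q + Proj` is invertible, and
`(1/λ) H = (−Q + Proj)⁻¹ − Proj`. -/
theorem stmt18 {V : Type*} [Fintype V] [DecidableEq V] [Nonempty V]
    (Q : Matrix V V ℝ) (lam : ℝ) (hlam : 0 < lam)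
    (hoff : ∀ x y, x ≠ y → 0 ≤ Q x y) (hrow : ∀ x, ∑ y, Q x y = 0)
    (hdiag : ∀ y, |Q y y| ≤ lam)
    (P : Matrix V V ℝ) (hP : P = 1 + lam⁻¹ • Q)
    (Proj : Matrix V V ℝ)
    (hProj : ∀ x y, Tendsto
      (fun N : ℕ => (1 / ((N : ℝ) + 1)) * ∑ n ∈ Finset.range (N + 1), (P ^ n) x y)
      atTop (𝓝 (Proj x y))) :
    Proj * Q = 0 ∧ IsUnit (-Q + Proj) ∧
    lam⁻¹ • ((1 - P + Proj)⁻¹ - Proj) = (-Q + Proj)⁻¹ - Proj :=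
  stmt18_general Q lam hlam hoff hrow hdiag P hP Proj hProj
end
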